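/- arXiv:2510.03645 — 5 statements merged into one kernel-verified Lean document; each statement's English description precedes it below -/
import Mathlib

section
/- Claim 4.5: Let C ⊆ Σ₁ × ⋯ × Σₙ be a code over pairwise disjoint alphabets, let t ≤ n, let T be a decision tree, let S ⊆ Σ, let O_S : S → {0,1} be a partial oracle, and let c ∈ C be a codeword that is NOT t-queried by S (i.e., c ∉ C[S,t]). Let Q(c,O) denote the event that c is t-queried by S ∪ path(T,O). If the event 'Q(c,O) and O agrees with O_S on S' has positive probability under a uniformly random oracle O : Σ → {0,1}, then Pr[ O(c₁) = ⋯ = O(cₙ) = 0 | Q(c,O) and O agrees with O_S on S ] ≤ 2^{-(n-t)}. -/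
/-!
Run `T` on `O` starting from the queried set `S`, but stop as soon as `t` symbols of `c` have
been queried. Since each query adds at most one symbol, a run that makes `c` `t`-queried stops
having queried exactly `t` of its `n` symbols, so the other `n - t` symbols of `c` are free: no
stopped run ever looks at them. Resampling an oracle on its free symbols therefore keeps the
stopped run, hence the conditioning event. Each all-zero oracle of the event thus yields `2^(n-t)`
oracles of the event, and these families are disjoint, since two all-zero oracles with the same
stopped run differ only on their common free symbols, where both vanish.
-/

open Finset
open scoped Classical

/-- A decision tree over symbols `σ` with outputs in `β`: each internal node queries a symbol
and branches on the answer bit, each leaf outputs an element of `β`. -/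
inductive DTree (σ β : Type) : Type where
  | leaf : β → DTree σ β
  | node : σ → DTree σ β → DTree σ β → DTree σ β

namespace DTree

variable {σ β : Type}

/-- `T(O)`: the output of `T` when run on the oracle `O`. -/
def eval : DTree σ β → (σ → Bool) → β
  | .leaf b, _ => b
  | .node s t0 t1, O => if O s then eval t1 O else eval t0 O

/-- The depth of a tree: the maximum number of queries along any root-to-leaf path. -/
def depth : DTree σ β → ℕ
  | .leaf _ => 0
  | .node _ t0 t1 => max (depth t0) (depth t1) + 1

/-- `path(T, O)`: the set of symbols queried by `T` when run on the oracle `O`. -/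
def path [DecidableEq σ] : DTree σ β → (σ → Bool) → Finset σ
  | .leaf _, _ => ∅
  | .node s t0 t1, O => insert s (if O s then path t1 O else path t0 O)

end DTree

variable {Sym : Type}

/-- The set of symbols `{c₁, …, cₙ}` of a word `c`. -/
def symbSet {n : ℕ} [DecidableEq Sym] (c : Fin n → Sym) : Finset Sym :=
  Finset.univ.image c

/-- `c` is `t`-queried by `S` if `|{c₁,…,cₙ} ∩ S| ≥ t`. -/
def tQueried {n : ℕ} [DecidableEq Sym] (t : ℕ) (S : Finset Sym) (c : Fin n → Sym) : Prop :=
  t ≤ (symbSet c ∩ S).card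

/-- `C` is `(ℓ, L, t)`-list recoverable: for every set `S` of at most `ℓ` symbols,
`|C[S,t]| ≤ L`. -/
def listRecoverable {n : ℕ} [DecidableEq Sym] (C : Finset (Fin n → Sym))
    (l L t : ℕ) : Prop :=
  ∀ S : Finset Sym, S.card ≤ l → (C.filter fun c => tQueried t S c).card ≤ L

/-- `C_O := {c ∈ C : O(c₁) = ⋯ = O(cₙ) = 0}`. -/
def codeZero {n : ℕ} [DecidableEq Sym] (C : Finset (Fin n → Sym)) (O : Sym → Bool) :
    Finset (Fin n → Sym) :=
  C.filter fun c => ∀ i, O (c i) = false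

/-- A tree is valid if, on every oracle, every coordinate of its output is queried. -/
def DTree.Valid {n : ℕ} [DecidableEq Sym] (T : DTree Sym (Fin n → Sym)) : Prop :=
  ∀ O : Sym → Bool, ∀ i : Fin n, T.eval O i ∈ T.path O

/-- Probability of an event under a uniformly random oracle `O : Σ → {0,1}`. -/
noncomputable def prOracle [Fintype Sym] (p : (Sym → Bool) → Prop) : ℝ :=
  ((Finset.univ.filter fun O : Sym → Bool => p O).card : ℝ) / (Fintype.card (Sym → Bool))

namespace DTree

variable {σ β : Type} [DecidableEq σ]

noncomputable def pathUntil (halt : Finset σ → Prop) :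
    DTree σ β → (σ → Bool) → Finset σ → Finset σ
  | .leaf _, _, P => P
  | .node s t0 t1, O, P =>
      if halt P then P
      else if O s then pathUntil halt t1 O (insert s P) else pathUntil halt t0 O (insert s P)

variable (halt : Finset σ → Prop)

lemma pathUntil_node_of_not_halt {s : σ} {t0 t1 : DTree σ β} {O : σ → Bool} {P : Finset σ}
    (hP : ¬ halt P) :
    (node s t0 t1).pathUntil halt O P = (if O s then t1 else t0).pathUntil halt O (insert s P) := by
  rw [pathUntil, if_neg hP]; split_ifs <;> rfl

lemma subset_pathUntil (T : DTree σ β) (O : σ → Bool) (P : Finset σ) :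
    P ⊆ T.pathUntil halt O P := by
  induction T generalizing P with
  | leaf => exact subset_rfl
  | node s t0 t1 ih0 ih1 =>
    by_cases hP : halt P
    · simp only [pathUntil, hP, if_true, subset_rfl]
    · rw [pathUntil_node_of_not_halt halt hP]
      refine (subset_insert s P).trans ?_
      split_ifs
      exacts [ih1 _, ih0 _]

lemma pathUntil_subset (T : DTree σ β) (O : σ → Bool) (P : Finset σ) :
    T.pathUntil halt O P ⊆ P ∪ T.path O := by
  induction T generalizing P with
  | leaf => exact subset_union_left
  | node s t0 t1 ih0 ih1 =>
    by_cases hP : halt P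
    · simp only [pathUntil, hP, if_true, subset_union_left]
    · rw [pathUntil_node_of_not_halt halt hP, path, union_insert, ← insert_union]
      split_ifs
      exacts [ih1 _, ih0 _]

lemma pathUntil_halts (T : DTree σ β) (O : σ → Bool) (P : Finset σ)
    (h : halt (P ∪ T.path O)) : halt (T.pathUntil halt O P) := by
  induction T generalizing P with
  | leaf => simpa [path, pathUntil] using h
  | node s t0 t1 ih0 ih1 =>
    by_cases hP : halt P
    · simp only [pathUntil, hP, if_true]
    · rw [path, union_insert, ← insert_union] at h
      rw [pathUntil_node_of_not_halt halt hP]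
      split_ifs at h ⊢
      exacts [ih1 _ h, ih0 _ h]

lemma pathUntil_congr (T : DTree σ β) {O O' : σ → Bool} (P : Finset σ)
    (h : ∀ x ∈ T.pathUntil halt O P, O' x = O x) :
    T.pathUntil halt O' P = T.pathUntil halt O P := by
  induction T generalizing P with
  | leaf => rfl
  | node s t0 t1 ih0 ih1 =>
    by_cases hP : halt P
    · simp only [pathUntil, hP, if_true]
    · rw [pathUntil_node_of_not_halt halt hP] at h ⊢
      rw [pathUntil_node_of_not_halt halt hP,
        h s (subset_pathUntil halt _ O _ (mem_insert_self s P))]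
      split_ifs at h ⊢
      exacts [ih1 _ h, ih0 _ h]

lemma card_inter_pathUntil_le (K : Finset σ) (t : ℕ) (T : DTree σ β) (O : σ → Bool)
    (P : Finset σ) (h : #(K ∩ P) ≤ t) :
    #(K ∩ T.pathUntil (fun P => t ≤ #(K ∩ P)) O P) ≤ t := by
  induction T generalizing P with
  | leaf => exact h
  | node s t0 t1 ih0 ih1 =>
    by_cases hP : t ≤ #(K ∩ P)
    · simpa only [pathUntil, hP, if_true]
    · have hstep : #(K ∩ insert s P) ≤ t := by
        rw [insert_inter]
        split_ifs
        · exact (card_insert_le _ _).trans (by omega)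
        · omega
      rw [pathUntil_node_of_not_halt _ hP]
      split_ifs
      exacts [ih1 _ hstep, ih0 _ hstep]

lemma card_inter_pathUntil_eq {K S : Finset σ} {t : ℕ} (hKS : #(K ∩ S) ≤ t) (T : DTree σ β)
    {O : σ → Bool} (hQ : t ≤ #(K ∩ (S ∪ T.path O))) :
    #(K ∩ T.pathUntil (fun P => t ≤ #(K ∩ P)) O S) = t :=
  (card_inter_pathUntil_le K t T O S hKS).antisymm
    (pathUntil_halts (fun P => t ≤ #(K ∩ P)) T O S hQ)

end DTree

section Resample

variable {σ : Type} [Fintype σ] [DecidableEq σ]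

def resample (F : Finset σ) (O : σ → Bool) : Finset (σ → Bool) :=
  univ.filter fun O' => ∀ x ∉ F, O' x = O x

lemma card_resample (F : Finset σ) (O : σ → Bool) : #(resample F O) = 2 ^ #F := by
  rw [show 2 ^ #F = #(F.pi fun _ => (univ : Finset Bool)) by simp [card_pi]]
  refine card_bij' (fun O' _ x _ => O' x) (fun g _ x => if hx : x ∈ F then g x hx else O x)
    (fun _ _ => by simp [mem_pi]) (fun _ _ => by simp +contextual [resample]) (fun O' hO' => ?_)
    (fun _ _ => by funext x hx; simp [hx])
  simp only [resample, mem_filter] at hO'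
  funext x
  by_cases hx : x ∈ F <;> simp [hx, hO'.2]

lemma card_mul_two_pow_le_card {D E : Finset (σ → Bool)} (F : (σ → Bool) → Finset σ) {m : ℕ}
    (hF : ∀ O ∈ D, #(F O) = m) (hE : ∀ O ∈ D, resample (F O) O ⊆ E)
    (hdisj : (D : Set (σ → Bool)).PairwiseDisjoint fun O => resample (F O) O) :
    #D * 2 ^ m ≤ #E :=
  calc #D * 2 ^ m = #(D.biUnion fun O => resample (F O) O) := by
        rw [card_biUnion hdisj, sum_congr rfl fun O hO => by rw [card_resample, hF O hO],
          sum_const, smul_eq_mul]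
    _ ≤ #E := card_le_card (biUnion_subset.2 hE)

lemma eq_of_mem_resample_of_mem_resample {F : Finset σ} {O₁ O₂ O' : σ → Bool}
    (h₁ : ∀ x ∈ F, O₁ x = false) (h₂ : ∀ x ∈ F, O₂ x = false)
    (hO'₁ : O' ∈ resample F O₁) (hO'₂ : O' ∈ resample F O₂) : O₁ = O₂ := by
  simp only [resample, mem_filter, mem_univ, true_and] at hO'₁ hO'₂
  funext x
  by_cases hx : x ∈ F
  · rw [h₁ x hx, h₂ x hx]
  · rw [← hO'₁ x hx, hO'₂ x hx]

lemma DTree.pathUntil_eq_of_mem_resample {β : Type} (halt : Finset σ → Prop) (T : DTree σ β)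
    {F P : Finset σ} {O O' : σ → Bool} (hF : Disjoint F (T.pathUntil halt O P))
    (hO' : O' ∈ resample F O) : T.pathUntil halt O' P = T.pathUntil halt O P :=
  T.pathUntil_congr halt P fun x hx => (mem_filter.1 hO').2 x (disjoint_right.1 hF hx)

end Resample

section Counting

variable {σ β : Type} [Fintype σ] [DecidableEq σ]

theorem card_allFalse_mul_two_pow_le_card {K S : Finset σ} {t : ℕ} (hKS : #(K ∩ S) ≤ t)
    (T : DTree σ β) (OS : σ → Bool) :
    #(univ.filter fun O : σ → Bool =>
        (∀ x ∈ K, O x = false) ∧ t ≤ #(K ∩ (S ∪ T.path O)) ∧ ∀ x ∈ S, O x = OS x) *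
        2 ^ (#K - t) ≤
      #(univ.filter fun O : σ → Bool => t ≤ #(K ∩ (S ∪ T.path O)) ∧ ∀ x ∈ S, O x = OS x) := by
  set stopped := fun O => T.pathUntil (fun P => t ≤ #(K ∩ P)) O S
  have hstopped : ∀ O O', O' ∈ resample (K \ stopped O) O → stopped O' = stopped O :=
    fun O O' => T.pathUntil_eq_of_mem_resample _ disjoint_sdiff_self_left
  refine card_mul_two_pow_le_card (fun O => K \ stopped O) (fun O hO => ?_)
    (fun O hO O' hO' => ?_) fun O₁ h₁ O₂ h₂ hne => disjoint_left.2 fun O' hO'₁ hO'₂ => hne ?_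
  · obtain ⟨-, hQ, -⟩ := (mem_filter.1 hO).2
    rw [card_sdiff, inter_comm, T.card_inter_pathUntil_eq hKS hQ]
  · obtain ⟨-, hQ, hS⟩ := (mem_filter.1 hO).2
    have hagree : ∀ x ∉ K \ stopped O, O' x = O x := (mem_filter.1 hO').2
    refine mem_filter.2 ⟨mem_univ _, ?_, fun x hx => ?_⟩
    · calc t = #(K ∩ stopped O') := by rw [hstopped O O' hO', T.card_inter_pathUntil_eq hKS hQ]
        _ ≤ #(K ∩ (S ∪ T.path O')) :=
          card_le_card (inter_subset_inter_left (T.pathUntil_subset _ O' S))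
    · rw [hagree x fun h => (mem_sdiff.1 h).2 (T.subset_pathUntil _ O S hx), hS x hx]
  · have hfree : K \ stopped O₁ = K \ stopped O₂ := by
      rw [← hstopped O₁ O' hO'₁, hstopped O₂ O' hO'₂]
    dsimp only at hO'₁ hO'₂
    rw [hfree] at hO'₁
    exact eq_of_mem_resample_of_mem_resample
      (fun x hx => (mem_filter.1 h₁).2.1 x (mem_sdiff.1 hx).1)
      (fun x hx => (mem_filter.1 h₂).2.1 x (mem_sdiff.1 hx).1) hO'₁ hO'₂

end Counting

lemma card_symbSet_of_mem_pairwiseDisjoint {n : ℕ} {A : Fin n → Finset Sym} [DecidableEq Sym]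
    (hdisj : ∀ i j : Fin n, i ≠ j → Disjoint (A i) (A j)) {c : Fin n → Sym}
    (hc : ∀ i, c i ∈ A i) : #(symbSet c) = n := by
  have hinj : Function.Injective c := fun i j hij => by_contra fun hne =>
    disjoint_left.1 (hdisj i j hne) (hc i) (hij ▸ hc j)
  rw [symbSet, card_image_of_injective _ hinj, card_univ, Fintype.card_fin]

lemma forall_mem_symbSet {n : ℕ} [DecidableEq Sym] {c : Fin n → Sym} {p : Sym → Prop} :
    (∀ x ∈ symbSet c, p x) ↔ ∀ i, p (c i) := by
  simp [symbSet]

lemma prOracle_div_prOracle [Fintype Sym] [DecidableEq Sym] (p q : (Sym → Bool) → Prop)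
    [DecidablePred p] [DecidablePred q] :
    prOracle p / prOracle q = #(univ.filter p) / (#(univ.filter q) : ℝ) := by
  rw [prOracle, prOracle, div_div_div_cancel_right₀ (by simp)]
  congr <;> exact Subsingleton.elim _ _

lemma div_le_two_zpow_of_mul_two_pow_le {a b k : ℕ} (h : a * 2 ^ k ≤ b) :
    (a : ℝ) / b ≤ 2 ^ (-(k : ℤ)) := by
  refine div_le_of_le_mul₀ b.cast_nonneg (by positivity) ?_
  rw [zpow_neg, zpow_natCast, inv_mul_eq_div, le_div_iff₀ (by positivity)]
  exact_mod_cast h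

theorem many_free_bits_general
    {n : ℕ} [Fintype Sym] [DecidableEq Sym]
    (A : Fin n → Finset Sym)
    (hdisj : ∀ i j : Fin n, i ≠ j → Disjoint (A i) (A j))
    (C : Finset (Fin n → Sym)) (hC : ∀ c ∈ C, ∀ i, c i ∈ A i)
    (t : ℕ)
    (T : DTree Sym (Fin n → Sym))
    (S : Finset Sym) (OS : Sym → Bool)
    (c : Fin n → Sym) (hcC : c ∈ C) (hcnot : ¬ tQueried t S c) :
    prOracle (fun O : Sym → Bool =>
        (∀ i, O (c i) = false) ∧ tQueried t (S ∪ T.path O) c ∧ ∀ x ∈ S, O x = OS x) /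
      prOracle (fun O : Sym → Bool => tQueried t (S ∪ T.path O) c ∧ ∀ x ∈ S, O x = OS x) ≤
      (2 : ℝ) ^ (-((n : ℤ) - (t : ℤ))) := by
  have hcount := card_allFalse_mul_two_pow_le_card (K := symbSet c) (not_le.1 hcnot).le T OS
  rw [card_symbSet_of_mem_pairwiseDisjoint hdisj (hC c hcC)] at hcount
  simp only [forall_mem_symbSet] at hcount
  rw [prOracle_div_prOracle]
  unfold tQueried
  calc _ ≤ (2 : ℝ) ^ (-((n - t : ℕ) : ℤ)) := by
        -- the two sides differ only in the `Decidable` instances of the filters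
        convert div_le_two_zpow_of_mul_two_pow_le hcount
    _ ≤ _ := zpow_le_zpow_right₀ one_le_two (by omega)

/-- **Claim 4.5.** Let `c ∈ C` be a codeword that is not `t`-queried by `S`, and let
`Q(c,O)` be the event that `c` is `t`-queried by `S ∪ path(T,O)`. Then, conditioned on
`Q(c,O)` and on `O` agreeing with the partial oracle `O_S` on `S`, the probability that
`O(c₁) = ⋯ = O(cₙ) = 0` is at most `2^{-(n-t)}`. -/
theorem many_free_bits
    {n : ℕ} (hn : 1 ≤ n) [Fintype Sym] [DecidableEq Sym]
    (A : Fin n → Finset Sym)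
    (hdisj : ∀ i j : Fin n, i ≠ j → Disjoint (A i) (A j))
    (C : Finset (Fin n → Sym)) (hC : ∀ c ∈ C, ∀ i, c i ∈ A i)
    (t : ℕ) (ht : t ≤ n)
    (T : DTree Sym (Fin n → Sym))
    (S : Finset Sym) (OS : Sym → Bool)
    (c : Fin n → Sym) (hcC : c ∈ C) (hcnot : ¬ tQueried t S c)
    (hpos : 0 < prOracle (fun O : Sym → Bool =>
        tQueried t (S ∪ T.path O) c ∧ ∀ x ∈ S, O x = OS x)) :
    prOracle (fun O : Sym → Bool =>
        (∀ i, O (c i) = false) ∧ tQueried t (S ∪ T.path O) c ∧ ∀ x ∈ S, O x = OS x) /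
      prOracle (fun O : Sym → Bool => tQueried t (S ∪ T.path O) c ∧ ∀ x ∈ S, O x = OS x) ≤
      (2 : ℝ) ^ (-((n : ℤ) - (t : ℤ))) :=
  many_free_bits_general A hdisj C hC t T S OS c hcC hcnot
end

section
/- Conditional step inside Claim 4.6: Let C ⊆ Σ₁ × ⋯ × Σₙ be an (ℓ,L,t)-list recoverable code with t ≤ n, and let T⁽¹⁾,…,T⁽ʳ⁾ be valid decision trees, each of depth at most q. For a sequence of trees and an oracle O, let E_O(T⁽¹⁾,…,T⁽ⁱ⁾) denote the event that T⁽¹⁾,…,T⁽ⁱ⁾ are t-well-spread on O and output i distinct elements of C_O. Then for every i < r with q·(i+1) ≤ ℓ and Pr[E_O(T⁽¹⁾,…,T⁽ⁱ⁾)] > 0 (over a uniformly random oracle O), we have Pr[ E_O(T⁽¹⁾,…,T⁽ⁱ⁺¹⁾) | E_O(T⁽¹⁾,…,T⁽ⁱ⁾) ] ≤ L·2^{-(n-t)}. -/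
open Finset
open scoped Classical

variable {Sym : Type}

/-- `E_O(T⁽¹⁾,…,T⁽ⁱ⁾)`: the first `i` trees of the sequence `T` are `t`-well-spread on `O`
(each tree's output is not `t`-queried by the symbols queried by the preceding trees) and
they output `i` distinct elements of `C_O`. -/
def seqEvent {n r : ℕ} [DecidableEq Sym] (t : ℕ) (C : Finset (Fin n → Sym))
    (T : Fin r → DTree Sym (Fin n → Sym)) (i : ℕ) (O : Sym → Bool) : Prop :=
  (∀ j : Fin r, (j : ℕ) < i →
      ¬ tQueried t ((Finset.Iio j).biUnion fun a => (T a).path O) ((T j).eval O)) ∧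
    i ≤ (((Finset.univ.filter fun j : Fin r => (j : ℕ) < i).image fun j => (T j).eval O) ∩
          codeZero C O).card

namespace Claim46

variable {σ β : Type}

lemma card_path_le_depth [DecidableEq σ] (T : DTree σ β) (O : σ → Bool) :
    (T.path O).card ≤ T.depth := by
  induction T with
  | leaf b => simp [DTree.path, DTree.depth]
  | node s t0 t1 ih0 ih1 =>
    simp only [DTree.path, DTree.depth]
    cases hOs : O s with
    | false =>
      simp only [Bool.false_eq_true, if_false]
      calc (insert s (t0.path O)).card ≤ (t0.path O).card + 1 := card_insert_le _ _
        _ ≤ max t0.depth t1.depth + 1 := by have := ih0; omega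
    | true =>
      simp only [if_true]
      calc (insert s (t1.path O)).card ≤ (t1.path O).card + 1 := card_insert_le _ _
        _ ≤ max t0.depth t1.depth + 1 := by have := ih1; omega

lemma path_eval_congr [DecidableEq σ] (T : DTree σ β) (O O' : σ → Bool)
    (h : ∀ s ∈ T.path O, O' s = O s) : T.path O' = T.path O ∧ T.eval O' = T.eval O := by
  induction T with
  | leaf b => exact ⟨rfl, rfl⟩
  | node s t0 t1 ih0 ih1 =>
    have hs : O' s = O s := h s (by simp [DTree.path])
    cases hOs : O s with
    | false =>
      have h0 : ∀ x ∈ t0.path O, O' x = O x := by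
        intro x hx; exact h x (by simp [DTree.path, hOs, hx])
      obtain ⟨hp, he⟩ := ih0 h0
      constructor
      · simp [DTree.path, hs, hOs, hp]
      · simp [DTree.eval, hs, hOs, he]
    | true =>
      have h1 : ∀ x ∈ t1.path O, O' x = O x := by
        intro x hx; exact h x (by simp [DTree.path, hOs, hx])
      obtain ⟨hp, he⟩ := ih1 h1
      constructor
      · simp [DTree.path, hs, hOs, hp]
      · simp [DTree.eval, hs, hOs, he]


variable [Fintype Sym] [DecidableEq Sym]

/-- The set of oracles agreeing with `O₀` on `S`. -/
def classSet (S : Finset Sym) (O₀ : Sym → Bool) : Finset (Sym → Bool) :=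
  Finset.univ.filter fun O => ∀ s ∈ S, O s = O₀ s

lemma mem_classSet {S : Finset Sym} {O₀ O : Sym → Bool} :
    O ∈ classSet S O₀ ↔ ∀ s ∈ S, O s = O₀ s := by
  simp [classSet]

lemma card_classSet (S : Finset Sym) (O₀ : Sym → Bool) :
    (classSet S O₀).card = 2 ^ (Sᶜ.card) := by
  have h1 : (classSet S O₀).card
      = Fintype.card {O : Sym → Bool // ∀ s ∈ S, O s = O₀ s} := by
    rw [Fintype.card_subtype]; rfl
  have e : {O : Sym → Bool // ∀ s ∈ S, O s = O₀ s} ≃ ({s : Sym // s ∈ Sᶜ} → Bool) :=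
    { toFun := fun O s => O.1 s.1
      invFun := fun f => ⟨fun s => if h : s ∈ S then O₀ s else f ⟨s, by simpa using h⟩,
        fun s hs => by simp [hs]⟩
      left_inv := by
        intro O
        apply Subtype.ext
        funext s
        by_cases h : s ∈ S
        · simpa [h] using (O.2 s h).symm
        · simp [h]
      right_inv := by
        intro f
        funext s
        have hs : s.1 ∉ S := by have := s.2; simp only [Finset.mem_compl] at this; exact this
        simp [hs] }
  rw [h1, Fintype.card_congr e, Fintype.card_fun]
  simp [Fintype.card_coe]
  rw [Finset.card_compl]

lemma classSet_split {S : Finset Sym} {O₀ : Sym → Bool} {a : Sym} (ha : a ∉ S) :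
    classSet S O₀ = classSet (insert a S) (Function.update O₀ a false)
      ∪ classSet (insert a S) (Function.update O₀ a true) := by
  ext O
  simp only [mem_classSet, mem_union, mem_insert]
  constructor
  · intro h
    have hS : ∀ (b : Bool), ∀ s ∈ S, O s = Function.update O₀ a b s := by
      intro b s hs
      rw [Function.update_of_ne (by rintro rfl; exact ha hs)]
      exact h s hs
    cases hOa : O a with
    | false =>
      left; intro s hs
      rcases hs with rfl | hs
      · simp [hOa]
      · exact hS false s hs
    | true =>
      right; intro s hs
      rcases hs with rfl | hs
      · simp [hOa]
      · exact hS true s hs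
  · rintro (h | h) <;>
    · intro s hs
      have := h s (Or.inr hs)
      rwa [Function.update_of_ne (by rintro rfl; exact ha hs)] at this

lemma classSet_split_disjoint {S : Finset Sym} {O₀ : Sym → Bool} {a : Sym} (ha : a ∉ S) :
    Disjoint (classSet (insert a S) (Function.update O₀ a false))
      (classSet (insert a S) (Function.update O₀ a true)) := by
  rw [Finset.disjoint_left]
  intro O h0 h1
  have e0 := (mem_classSet.1 h0) a (mem_insert_self _ _)
  have e1 := (mem_classSet.1 h1) a (mem_insert_self _ _)
  simp at e0 e1
  rw [e0] at e1
  exact absurd e1 (by simp)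

lemma card_compl_insert {S : Finset Sym} {a : Sym} (ha : a ∉ S) :
    Sᶜ.card = (insert a S)ᶜ.card + 1 := by
  have hac : a ∈ Sᶜ := by simpa using ha
  rw [Finset.compl_insert, Finset.card_erase_of_mem hac]
  have : 0 < Sᶜ.card := Finset.card_pos.2 ⟨a, hac⟩
  omega


variable {n : ℕ}

lemma tQueried_mono {t : ℕ} {S S' : Finset Sym} {c : Fin n → Sym} (h : S ⊆ S')
    (hq : tQueried t S c) : tQueried t S' c :=
  le_trans hq (card_le_card (inter_subset_inter (Finset.Subset.refl _) h))

noncomputable def Wset (C : Finset (Fin n → Sym)) (t : ℕ) (Sfix S₀ : Finset Sym) (O₀ : Sym → Bool) :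
    Finset (Fin n → Sym) :=
  C.filter fun c => ¬ tQueried t Sfix c ∧ tQueried t S₀ c ∧ ∀ s ∈ symbSet c ∩ S₀, O₀ s = false

noncomputable def phi (C : Finset (Fin n → Sym)) (t L : ℕ) (Sfix S₀ : Finset Sym)
    (O₀ : Sym → Bool) : ℝ :=
  (∑ c ∈ Wset C t Sfix S₀ O₀, ((2:ℝ) ^ (symbSet c \ S₀).card)⁻¹)
    + ((L : ℝ) - (C.filter fun c => tQueried t S₀ c).card) * ((2:ℝ) ^ (n - t))⁻¹

lemma phi_nonneg {C : Finset (Fin n → Sym)} {t L : ℕ} {Sfix S₀ : Finset Sym}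
    {O₀ : Sym → Bool} (hD : (C.filter fun c => tQueried t S₀ c).card ≤ L) :
    0 ≤ phi C t L Sfix S₀ O₀ := by
  apply add_nonneg
  · apply Finset.sum_nonneg; intro c _; positivity
  · apply mul_nonneg
    · have : ((C.filter fun c => tQueried t S₀ c).card : ℝ) ≤ (L : ℝ) := by exact_mod_cast hD
      linarith
    · positivity

lemma phi_le {C : Finset (Fin n → Sym)} {t L : ℕ} {S₀ : Finset Sym} {O₀ : Sym → Bool} :
    phi C t L S₀ S₀ O₀ ≤ (L : ℝ) * ((2:ℝ) ^ (n - t))⁻¹ := by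
  have hW : Wset C t S₀ S₀ O₀ = ∅ := by
    apply Finset.filter_false_of_mem
    intro c _ h
    exact h.1 h.2.1
  rw [phi, hW]
  simp only [Finset.sum_empty, zero_add]
  apply mul_le_mul_of_nonneg_right _ (by positivity)
  have : (0:ℝ) ≤ ((C.filter fun c => tQueried t S₀ c).card : ℝ) := by positivity
  linarith

lemma phi_split (C : Finset (Fin n → Sym)) (t L : ℕ)
    (hcard : ∀ c ∈ C, (symbSet c).card = n)
    (Sfix S₀ : Finset Sym) (O₀ : Sym → Bool) (σc : Sym) (hσ : σc ∉ S₀) :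
    phi C t L Sfix (insert σc S₀) (Function.update O₀ σc false)
      + phi C t L Sfix (insert σc S₀) (Function.update O₀ σc true)
      ≤ 2 * phi C t L Sfix S₀ O₀ := by
  set S' : Finset Sym := insert σc S₀ with hS'
  set Of : Sym → Bool := Function.update O₀ σc false with hOf
  set Ot : Sym → Bool := Function.update O₀ σc true with hOt
  set β : ℝ := ((2:ℝ) ^ (n - t))⁻¹ with hβ
  have hβ0 : 0 ≤ β := by positivity
  set W : Finset (Fin n → Sym) := Wset C t Sfix S₀ O₀ with hW
  set W0 : Finset (Fin n → Sym) := Wset C t Sfix S' Of with hW0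
  set W1 : Finset (Fin n → Sym) := Wset C t Sfix S' Ot with hW1
  set News : Finset (Fin n → Sym) :=
    C.filter (fun c => tQueried t S' c ∧ ¬ tQueried t S₀ c) with hNews
  -- basic pointwise facts
  have hne : ∀ s ∈ S₀, s ≠ σc := fun s hs h => hσ (h ▸ hs)
  have hinter : ∀ c : Fin n → Sym, σc ∉ symbSet c → symbSet c ∩ S' = symbSet c ∩ S₀ := by
    intro c hc
    ext s
    simp only [mem_inter, hS', mem_insert]
    constructor
    · rintro ⟨hs, rfl | hs'⟩
      · exact absurd hs hc
      · exact ⟨hs, hs'⟩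
    · rintro ⟨hs, hs'⟩; exact ⟨hs, Or.inr hs'⟩
  have hsdiff : ∀ c : Fin n → Sym, σc ∉ symbSet c → symbSet c \ S' = symbSet c \ S₀ := by
    intro c hc
    ext s
    simp only [mem_sdiff, hS', mem_insert]
    constructor
    · rintro ⟨hs, h⟩; exact ⟨hs, fun h' => h (Or.inr h')⟩
    · rintro ⟨hs, h⟩
      refine ⟨hs, ?_⟩
      rintro (rfl | h')
      · exact hc hs
      · exact h h'
  -- membership without σc
  have hmem_noσ : ∀ (b : Bool) (c : Fin n → Sym), σc ∉ symbSet c →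
      (c ∈ Wset C t Sfix S' (Function.update O₀ σc b) ↔ c ∈ W) := by
    intro b c hc
    simp only [hW, Wset, mem_filter]
    rw [hinter c hc]
    constructor
    · rintro ⟨h1, h2, h3, h4⟩
      refine ⟨h1, h2, ?_, ?_⟩
      · rwa [tQueried, hinter c hc] at h3
      · intro s hs
        have := h4 s hs
        rwa [Function.update_of_ne (hne s (mem_of_mem_inter_right hs))] at this
    · rintro ⟨h1, h2, h3, h4⟩
      refine ⟨h1, h2, ?_, ?_⟩
      · rw [tQueried, hinter c hc]; exact h3
      · intro s hs
        rw [Function.update_of_ne (hne s (mem_of_mem_inter_right hs))]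
        exact h4 s hs
  -- W1 = W.filter (σc ∉ symbSet ·)
  have hW1eq : W1 = W.filter (fun c => σc ∉ symbSet c) := by
    ext c
    rw [mem_filter]
    constructor
    · intro hc
      have hcσ : σc ∉ symbSet c := by
        intro hcs
        have := (mem_filter.1 hc).2.2.2 σc (mem_inter.2 ⟨hcs, mem_insert_self _ _⟩)
        rw [hOt, Function.update_self] at this
        exact absurd this (by simp)
      exact ⟨(hmem_noσ true c hcσ).1 hc, hcσ⟩
    · rintro ⟨hc, hcσ⟩
      exact (hmem_noσ true c hcσ).2 hc
  have hW0a : W0.filter (fun c => σc ∉ symbSet c) = W.filter (fun c => σc ∉ symbSet c) := by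
    ext c
    simp only [mem_filter]
    constructor
    · rintro ⟨hc, hcσ⟩; exact ⟨(hmem_noσ false c hcσ).1 hc, hcσ⟩
    · rintro ⟨hc, hcσ⟩; exact ⟨(hmem_noσ false c hcσ).2 hc, hcσ⟩
  -- sums
  have hA1 : (∑ c ∈ W1, ((2:ℝ) ^ (symbSet c \ S').card)⁻¹)
      = ∑ c ∈ W.filter (fun c => σc ∉ symbSet c), ((2:ℝ) ^ (symbSet c \ S₀).card)⁻¹ := by
    rw [hW1eq]
    apply Finset.sum_congr rfl
    intro c hc
    rw [hsdiff c (mem_filter.1 hc).2]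
  -- split W0
  have hsplit0 : (∑ c ∈ W0, ((2:ℝ) ^ (symbSet c \ S').card)⁻¹)
      = (∑ c ∈ W0.filter (fun c => σc ∈ symbSet c), ((2:ℝ) ^ (symbSet c \ S').card)⁻¹)
        + ∑ c ∈ W0.filter (fun c => σc ∉ symbSet c), ((2:ℝ) ^ (symbSet c \ S').card)⁻¹ :=
    (Finset.sum_filter_add_sum_filter_not _ _ _).symm
  have hW0a' : (∑ c ∈ W0.filter (fun c => σc ∉ symbSet c), ((2:ℝ) ^ (symbSet c \ S').card)⁻¹)
      = ∑ c ∈ W.filter (fun c => σc ∉ symbSet c), ((2:ℝ) ^ (symbSet c \ S₀).card)⁻¹ := by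
    rw [hW0a]
    apply Finset.sum_congr rfl
    intro c hc
    rw [hsdiff c (mem_filter.1 hc).2]
  -- the σc ∈ symbSet part, further split by tQueried t S₀
  set F : Finset (Fin n → Sym) := W0.filter (fun c => σc ∈ symbSet c) with hF
  have hsplitF : (∑ c ∈ F, ((2:ℝ) ^ (symbSet c \ S').card)⁻¹)
      = (∑ c ∈ F.filter (fun c => tQueried t S₀ c), ((2:ℝ) ^ (symbSet c \ S').card)⁻¹)
        + ∑ c ∈ F.filter (fun c => ¬ tQueried t S₀ c), ((2:ℝ) ^ (symbSet c \ S').card)⁻¹ :=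
    (Finset.sum_filter_add_sum_filter_not _ _ _).symm
  -- old-and-σ part
  have hold : (∑ c ∈ F.filter (fun c => tQueried t S₀ c), ((2:ℝ) ^ (symbSet c \ S').card)⁻¹)
      ≤ ∑ c ∈ W.filter (fun c => σc ∈ symbSet c), 2 * ((2:ℝ) ^ (symbSet c \ S₀).card)⁻¹ := by
    have hsub : F.filter (fun c => tQueried t S₀ c) ⊆ W.filter (fun c => σc ∈ symbSet c) := by
      intro c hc
      simp only [hF, mem_filter, hW0, Wset] at hc
      obtain ⟨⟨⟨h1, h2, _h3, h4⟩, h5⟩, h6⟩ := hc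
      rw [mem_filter, hW, Wset, mem_filter]
      refine ⟨⟨h1, h2, h6, ?_⟩, h5⟩
      intro s hs
      have hs' : s ∈ symbSet c ∩ S' := by
        rw [mem_inter] at hs ⊢
        exact ⟨hs.1, by rw [hS']; exact mem_insert_of_mem hs.2⟩
      have := h4 s hs'
      rwa [hOf, Function.update_of_ne (hne s (mem_of_mem_inter_right hs))] at this
    have hval : ∀ c ∈ F.filter (fun c => tQueried t S₀ c),
        ((2:ℝ) ^ (symbSet c \ S').card)⁻¹ = 2 * ((2:ℝ) ^ (symbSet c \ S₀).card)⁻¹ := by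
      intro c hc
      have hcσ : σc ∈ symbSet c := (mem_filter.1 (mem_filter.1 hc).1).2
      have hins : symbSet c \ S₀ = insert σc (symbSet c \ S') := by
        ext s
        simp only [mem_sdiff, mem_insert, hS']
        constructor
        · rintro ⟨hs, h⟩
          by_cases hsσ : s = σc
          · exact Or.inl hsσ
          · exact Or.inr ⟨hs, fun h' => h'.elim (fun e => hsσ e) h⟩
        · rintro (rfl | ⟨hs, h⟩)
          · exact ⟨hcσ, hσ⟩
          · exact ⟨hs, fun h' => h (Or.inr h')⟩
      have hσnot : σc ∉ symbSet c \ S' := by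
        simp [hS']
      rw [hins, card_insert_of_notMem hσnot, pow_succ]
      rw [mul_inv]
      ring
    rw [Finset.sum_congr rfl hval]
    apply Finset.sum_le_sum_of_subset_of_nonneg hsub
    intro c _ _
    positivity
  -- new part
  have hnew : (∑ c ∈ F.filter (fun c => ¬ tQueried t S₀ c), ((2:ℝ) ^ (symbSet c \ S').card)⁻¹)
      ≤ (News.card : ℝ) * β := by
    have hval : ∀ c ∈ F.filter (fun c => ¬ tQueried t S₀ c),
        ((2:ℝ) ^ (symbSet c \ S').card)⁻¹ = β := by
      intro c hc
      rw [mem_filter] at hc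
      obtain ⟨hcF, hnq⟩ := hc
      rw [hF, mem_filter] at hcF
      obtain ⟨hcW0, hcσ⟩ := hcF
      rw [hW0, Wset, mem_filter] at hcW0
      obtain ⟨h1, _h2, h3, _h4⟩ := hcW0
      -- card computations
      have hn : (symbSet c ∩ S').card + (symbSet c \ S').card = n := by
        rw [Finset.card_inter_add_card_sdiff]
        exact hcard c h1
      have hsub' : symbSet c ∩ S' ⊆ insert σc (symbSet c ∩ S₀) := by
        intro s hs
        rw [mem_inter, hS', mem_insert] at hs
        rcases hs.2 with rfl | hs'
        · exact mem_insert_self _ _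
        · exact mem_insert_of_mem (mem_inter.2 ⟨hs.1, hs'⟩)
      have hle : (symbSet c ∩ S').card ≤ (symbSet c ∩ S₀).card + 1 :=
        le_trans (card_le_card hsub') (card_insert_le _ _)
      have ht1 : t ≤ (symbSet c ∩ S').card := h3
      have ht2 : ¬ t ≤ (symbSet c ∩ S₀).card := hnq
      have : (symbSet c \ S').card = n - t := by omega
      rw [this, hβ]
    rw [Finset.sum_congr rfl hval]
    have hsub : F.filter (fun c => ¬ tQueried t S₀ c) ⊆ News := by
      intro c hc
      rw [mem_filter] at hc
      obtain ⟨hcF, hnq⟩ := hc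
      rw [hF, mem_filter] at hcF
      have := mem_filter.1 hcF.1
      rw [hNews, mem_filter]
      exact ⟨this.1, this.2.2.1, hnq⟩
    calc (∑ _c ∈ F.filter (fun c => ¬ tQueried t S₀ c), β)
        ≤ ∑ _c ∈ News, β := by
          apply Finset.sum_le_sum_of_subset_of_nonneg hsub
          intro c _ _; exact hβ0
      _ = (News.card : ℝ) * β := by rw [Finset.sum_const, nsmul_eq_mul]
  -- D' = D + News.card
  have hDD : ((C.filter fun c => tQueried t S' c).card : ℝ)
      = ((C.filter fun c => tQueried t S₀ c).card : ℝ) + (News.card : ℝ) := by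
    have hunion : (C.filter fun c => tQueried t S' c)
        = (C.filter fun c => tQueried t S₀ c) ∪ News := by
      ext c
      simp only [mem_filter, mem_union, hNews]
      constructor
      · rintro ⟨hc, hq⟩
        by_cases h : tQueried t S₀ c
        · exact Or.inl ⟨hc, h⟩
        · exact Or.inr ⟨hc, hq, h⟩
      · rintro (⟨hc, hq⟩ | ⟨hc, hq, _⟩)
        · exact ⟨hc, tQueried_mono (by rw [hS']; exact subset_insert _ _) hq⟩
        · exact ⟨hc, hq⟩
    have hdisj : Disjoint (C.filter fun c => tQueried t S₀ c) News := by
      rw [Finset.disjoint_left]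
      intro c hc hc'
      exact (mem_filter.1 hc').2.2 (mem_filter.1 hc).2
    rw [hunion, card_union_of_disjoint hdisj]
    push_cast
    ring
  -- assemble
  rw [phi, phi, phi]
  rw [← hW0, ← hW1, ← hW, ← hβ]
  have hAsplit : (∑ c ∈ W, ((2:ℝ) ^ (symbSet c \ S₀).card)⁻¹)
      = (∑ c ∈ W.filter (fun c => σc ∈ symbSet c), ((2:ℝ) ^ (symbSet c \ S₀).card)⁻¹)
        + ∑ c ∈ W.filter (fun c => σc ∉ symbSet c), ((2:ℝ) ^ (symbSet c \ S₀).card)⁻¹ :=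
    (Finset.sum_filter_add_sum_filter_not _ _ _).symm
  rw [hDD]
  have h2 : (∑ c ∈ W.filter (fun c => σc ∈ symbSet c), 2 * ((2:ℝ) ^ (symbSet c \ S₀).card)⁻¹)
      = 2 * ∑ c ∈ W.filter (fun c => σc ∈ symbSet c), ((2:ℝ) ^ (symbSet c \ S₀).card)⁻¹ :=
    (Finset.mul_sum _ _ _).symm
  have hA0 := hsplit0
  linarith [hold, hnew, hA1, hW0a', hA0, hAsplit, h2, hβ0, mul_nonneg (Nat.cast_nonneg News.card) hβ0]

def Good {n : ℕ} (C : Finset (Fin n → Sym)) (t : ℕ) (Sfix : Finset Sym)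
    (Tr : DTree Sym (Fin n → Sym)) (S₀ : Finset Sym) (O : Sym → Bool) : Prop :=
  Tr.eval O ∈ C ∧ ¬ tQueried t Sfix (Tr.eval O) ∧ (∀ k, O (Tr.eval O k) = false) ∧
    symbSet (Tr.eval O) ⊆ S₀ ∪ Tr.path O

lemma core {n : ℕ} (C : Finset (Fin n → Sym)) (t l L : ℕ) (ht : t ≤ n)
    (hLR : listRecoverable C l L t)
    (hcard : ∀ c ∈ C, (symbSet c).card = n)
    (Sfix : Finset Sym)
    (Tr : DTree Sym (Fin n → Sym)) :
    ∀ (S₀ : Finset Sym) (O₀ : Sym → Bool), Sfix ⊆ S₀ → S₀.card + Tr.depth ≤ l →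
    (((classSet S₀ O₀).filter (Good C t Sfix Tr S₀)).card : ℝ)
      ≤ phi C t L Sfix S₀ O₀ * ((classSet S₀ O₀).card : ℝ) := by
  induction Tr with
  | leaf c =>
    intro S₀ O₀ hsub hdep
    have hS₀l : S₀.card ≤ l := by
      simp only [DTree.depth] at hdep; omega
    have hD : (C.filter fun c => tQueried t S₀ c).card ≤ L := hLR S₀ hS₀l
    have hphi0 : 0 ≤ phi C t L Sfix S₀ O₀ := phi_nonneg hD
    by_cases hgood : c ∈ C ∧ ¬ tQueried t Sfix c ∧ symbSet c ⊆ S₀ ∧ ∀ s ∈ symbSet c, O₀ s = false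
    · obtain ⟨hcC, hnt, hss, hzero⟩ := hgood
      have hfe : (classSet S₀ O₀).filter (Good C t Sfix (.leaf c) S₀) = classSet S₀ O₀ := by
        apply Finset.filter_true_of_mem
        intro O hO
        refine ⟨hcC, hnt, ?_, ?_⟩
        · intro k
          have hk : c k ∈ symbSet c := mem_image.2 ⟨k, mem_univ _, rfl⟩
          show O (c k) = false
          rw [mem_classSet.1 hO _ (hss hk)]
          exact hzero _ hk
        · intro s hs
          exact mem_union_left _ (hss hs)
      rw [hfe]
      have h1 : (1:ℝ) ≤ phi C t L Sfix S₀ O₀ := by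
        have hcW : c ∈ Wset C t Sfix S₀ O₀ := by
          rw [Wset, mem_filter]
          refine ⟨hcC, hnt, ?_, ?_⟩
          · rw [tQueried, Finset.inter_eq_left.2 hss, hcard c hcC]
            exact ht
          · intro s hs
            exact hzero s (mem_of_mem_inter_left hs)
        have hterm : ((2:ℝ) ^ (symbSet c \ S₀).card)⁻¹ = 1 := by
          rw [Finset.sdiff_eq_empty_iff_subset.2 hss]
          simp
        have hge : (1:ℝ) ≤ ∑ c' ∈ Wset C t Sfix S₀ O₀, ((2:ℝ) ^ (symbSet c' \ S₀).card)⁻¹ := by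
          rw [← hterm]
          apply Finset.single_le_sum _ hcW
          intro c' _
          positivity
        have hB : (0:ℝ) ≤ ((L : ℝ) - (C.filter fun c => tQueried t S₀ c).card)
            * ((2:ℝ) ^ (n - t))⁻¹ := by
          apply mul_nonneg
          · have : ((C.filter fun c => tQueried t S₀ c).card : ℝ) ≤ (L : ℝ) := by
              exact_mod_cast hD
            linarith
          · positivity
        rw [phi]
        linarith
      have hc0 : (0:ℝ) ≤ ((classSet S₀ O₀).card : ℝ) := by positivity
      nlinarith
    · have hfe : (classSet S₀ O₀).filter (Good C t Sfix (.leaf c) S₀) = ∅ := by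
        apply Finset.filter_false_of_mem
        intro O hO hG
        obtain ⟨h1, h2, h3, h4⟩ := hG
        apply hgood
        have hss : symbSet c ⊆ S₀ := by
          intro s hs
          have := h4 hs
          simp only [DTree.path, Finset.union_empty] at this
          exact this
        refine ⟨h1, h2, hss, ?_⟩
        intro s hs
        obtain ⟨k, _, rfl⟩ := mem_image.1 hs
        rw [← mem_classSet.1 hO _ (hss hs)]
        exact h3 k
      rw [hfe]
      simp only [card_empty, Nat.cast_zero]
      positivity
  | node σc t0 t1 ih0 ih1 =>
    intro S₀ O₀ hsub hdep
    simp only [DTree.depth] at hdep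
    by_cases hσ : σc ∈ S₀
    · -- single-branch case
      cases hb : O₀ σc with
      | false =>
        have hfe : (classSet S₀ O₀).filter (Good C t Sfix (.node σc t0 t1) S₀)
            = (classSet S₀ O₀).filter (Good C t Sfix t0 S₀) := by
          apply Finset.filter_congr
          intro O hO
          have hOσ : O σc = false := by rw [mem_classSet.1 hO _ hσ, hb]
          have he : (DTree.node σc t0 t1).eval O = t0.eval O := by
            simp [DTree.eval, hOσ]
          have hp : (DTree.node σc t0 t1).path O = insert σc (t0.path O) := by
            simp [DTree.path, hOσ]
          have hup : S₀ ∪ insert σc (t0.path O) = S₀ ∪ t0.path O := by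
            rw [Finset.union_insert, Finset.insert_eq_self.2 (mem_union_left _ hσ)]
          rw [Good, Good, he, hp, hup]
        rw [hfe]
        exact ih0 S₀ O₀ hsub (by omega)
      | true =>
        have hfe : (classSet S₀ O₀).filter (Good C t Sfix (.node σc t0 t1) S₀)
            = (classSet S₀ O₀).filter (Good C t Sfix t1 S₀) := by
          apply Finset.filter_congr
          intro O hO
          have hOσ : O σc = true := by rw [mem_classSet.1 hO _ hσ, hb]
          have he : (DTree.node σc t0 t1).eval O = t1.eval O := by
            simp [DTree.eval, hOσ]
          have hp : (DTree.node σc t0 t1).path O = insert σc (t1.path O) := by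
            simp [DTree.path, hOσ]
          have hup : S₀ ∪ insert σc (t1.path O) = S₀ ∪ t1.path O := by
            rw [Finset.union_insert, Finset.insert_eq_self.2 (mem_union_left _ hσ)]
          rw [Good, Good, he, hp, hup]
        rw [hfe]
        exact ih1 S₀ O₀ hsub (by omega)
    · -- split case
      set S' : Finset Sym := insert σc S₀ with hS'
      set Of : Sym → Bool := Function.update O₀ σc false with hOf
      set Ot : Sym → Bool := Function.update O₀ σc true with hOt
      have hsubS' : S₀ ⊆ S' := subset_insert _ _
      -- rewrite the filtered set as a union over the two subclasses
      have hsplit := classSet_split (S := S₀) (O₀ := O₀) hσ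
      have hdisjc := classSet_split_disjoint (S := S₀) (O₀ := O₀) (a := σc) hσ
      have hcardcount : ((classSet S₀ O₀).filter (Good C t Sfix (.node σc t0 t1) S₀)).card
          = ((classSet S' Of).filter (Good C t Sfix (.node σc t0 t1) S₀)).card
            + ((classSet S' Ot).filter (Good C t Sfix (.node σc t0 t1) S₀)).card := by
        rw [hsplit, Finset.filter_union]
        exact card_union_of_disjoint (Finset.disjoint_filter_filter hdisjc)
      -- convert each subclass filter to the corresponding subtree
      have hconv : ∀ (b : Bool) (tb : DTree Sym (Fin n → Sym)),
          (∀ O : Sym → Bool, O σc = b →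
            ((DTree.node σc t0 t1).eval O = tb.eval O
              ∧ (DTree.node σc t0 t1).path O = insert σc (tb.path O))) →
          (classSet S' (Function.update O₀ σc b)).filter (Good C t Sfix (.node σc t0 t1) S₀)
          = (classSet S' (Function.update O₀ σc b)).filter (Good C t Sfix tb S') := by
        intro b tb hOb
        apply Finset.filter_congr
        intro O hO
        have hOσ : O σc = b := by
          rw [mem_classSet.1 hO _ (mem_insert_self _ _), Function.update_self]
        obtain ⟨he, hp⟩ := hOb O hOσ
        have hup : S₀ ∪ insert σc (tb.path O) = S' ∪ tb.path O := by
          rw [Finset.union_insert, hS', Finset.insert_union]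
        rw [Good, Good, he, hp, hup]
      have hconv0 := hconv false t0 (by
        intro O hOσ
        constructor
        · simp [DTree.eval, hOσ]
        · simp [DTree.path, hOσ])
      have hconv1 := hconv true t1 (by
        intro O hOσ
        constructor
        · simp [DTree.eval, hOσ]
        · simp [DTree.path, hOσ])
      have hb0 := ih0 S' Of (hsub.trans hsubS') (by
        rw [hS', card_insert_of_notMem hσ]; omega)
      have hb1 := ih1 S' Ot (hsub.trans hsubS') (by
        rw [hS', card_insert_of_notMem hσ]; omega)
      have hps := phi_split C t L hcard Sfix S₀ O₀ σc hσ
      -- cardinalities of classes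
      have hcc : (classSet S₀ O₀).card = 2 * (classSet S' Of).card := by
        rw [card_classSet, card_classSet, card_compl_insert hσ, pow_succ, hS']
        ring
      have hcc' : (classSet S' Ot).card = (classSet S' Of).card := by
        rw [card_classSet, card_classSet]
      have hphis0 : 0 ≤ phi C t L Sfix S' Of := by
        apply phi_nonneg
        apply hLR
        rw [hS', card_insert_of_notMem hσ]
        omega
      have hphis1 : 0 ≤ phi C t L Sfix S' Ot := by
        apply phi_nonneg
        apply hLR
        rw [hS', card_insert_of_notMem hσ]
        omega
      have hcf0 : (0:ℝ) ≤ ((classSet S' Of).card : ℝ) := by positivity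
      calc (((classSet S₀ O₀).filter (Good C t Sfix (.node σc t0 t1) S₀)).card : ℝ)
          = (((classSet S' Of).filter (Good C t Sfix t0 S')).card : ℝ)
            + (((classSet S' Ot).filter (Good C t Sfix t1 S')).card : ℝ) := by
            rw [hcardcount, hconv0, hconv1]; push_cast; ring
        _ ≤ phi C t L Sfix S' Of * ((classSet S' Of).card : ℝ)
            + phi C t L Sfix S' Ot * ((classSet S' Ot).card : ℝ) := by
            linarith
        _ = (phi C t L Sfix S' Of + phi C t L Sfix S' Ot) * ((classSet S' Of).card : ℝ) := by
            rw [hcc']; ring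
        _ ≤ (2 * phi C t L Sfix S₀ O₀) * ((classSet S' Of).card : ℝ) := by
            apply mul_le_mul_of_nonneg_right hps hcf0
        _ = phi C t L Sfix S₀ O₀ * ((classSet S₀ O₀).card : ℝ) := by
            rw [hcc]; push_cast; ring

def Spre {n r : ℕ} (T : Fin r → DTree Sym (Fin n → Sym)) (j₀ : Fin r) (O : Sym → Bool) :
    Finset Sym :=
  (Finset.Iio j₀).biUnion fun a => (T a).path O

lemma spre_congr {n r : ℕ} (T : Fin r → DTree Sym (Fin n → Sym)) (j₀ : Fin r)
    (O O' : Sym → Bool) (hagree : ∀ s ∈ Spre T j₀ O, O' s = O s) :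
    (∀ a ∈ Finset.Iio j₀, (T a).path O' = (T a).path O ∧ (T a).eval O' = (T a).eval O)
      ∧ Spre T j₀ O' = Spre T j₀ O := by
  have h : ∀ a ∈ Finset.Iio j₀, (T a).path O' = (T a).path O ∧ (T a).eval O' = (T a).eval O := by
    intro a ha
    apply path_eval_congr
    intro s hs
    exact hagree s (mem_biUnion.2 ⟨a, ha, hs⟩)
  refine ⟨h, ?_⟩
  apply Finset.biUnion_congr rfl
  intro a ha
  exact (h a ha).1

lemma seqEvent_congr {n r : ℕ} (t : ℕ) (C : Finset (Fin n → Sym))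
    (T : Fin r → DTree Sym (Fin n → Sym)) (hvalid : ∀ a, (T a).Valid)
    (i : ℕ) (j₀ : Fin r) (hj₀ : (j₀ : ℕ) = i) (O O' : Sym → Bool)
    (hagree : ∀ s ∈ Spre T j₀ O, O' s = O s)
    (hE : seqEvent t C T i O) : seqEvent t C T i O' := by
  have hmemIio : ∀ a : Fin r, a ∈ Finset.Iio j₀ ↔ (a : ℕ) < i := by
    intro a
    rw [Finset.mem_Iio, Fin.lt_def, hj₀]
  obtain ⟨hpe, _⟩ := spre_congr T j₀ O O' hagree
  constructor
  · intro j hj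
    have hjI : j ∈ Finset.Iio j₀ := (hmemIio j).2 hj
    have hinner : ((Finset.Iio j).biUnion fun a => (T a).path O')
        = (Finset.Iio j).biUnion fun a => (T a).path O := by
      apply Finset.biUnion_congr rfl
      intro a ha
      have haI : a ∈ Finset.Iio j₀ := by
        rw [Finset.mem_Iio] at ha ⊢
        exact lt_trans ha ((Finset.mem_Iio).1 hjI)
      exact (hpe a haI).1
    rw [hinner, (hpe j hjI).2]
    exact hE.1 j hj
  · have himg : ((Finset.univ.filter fun j : Fin r => (j : ℕ) < i).image
        fun j => (T j).eval O') = (Finset.univ.filter fun j : Fin r => (j : ℕ) < i).image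
        fun j => (T j).eval O := by
      apply Finset.image_congr
      intro j hj
      have hjI : j ∈ Finset.Iio j₀ := (hmemIio j).2 (mem_filter.1 hj).2
      exact (hpe j hjI).2
    rw [himg]
    have hint : ((Finset.univ.filter fun j : Fin r => (j : ℕ) < i).image
          fun j => (T j).eval O) ∩ codeZero C O'
        = ((Finset.univ.filter fun j : Fin r => (j : ℕ) < i).image
          fun j => (T j).eval O) ∩ codeZero C O := by
      ext c
      simp only [mem_inter, and_congr_right_iff]
      intro hc
      obtain ⟨j, hj, rfl⟩ := mem_image.1 hc
      have hjI : j ∈ Finset.Iio j₀ := (hmemIio j).2 (mem_filter.1 hj).2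
      have hOO' : ∀ k, O' ((T j).eval O k) = O ((T j).eval O k) := by
        intro k
        apply hagree
        apply mem_biUnion.2 ⟨j, hjI, _⟩
        exact hvalid j O k
      rw [codeZero, codeZero, mem_filter, mem_filter]
      constructor
      · rintro ⟨h1, h2⟩
        exact ⟨h1, fun k => by rw [← hOO' k]; exact h2 k⟩
      · rintro ⟨h1, h2⟩
        exact ⟨h1, fun k => by rw [hOO' k]; exact h2 k⟩
    rw [hint]
    exact hE.2

end Claim46

/-- **Conditional step inside Claim 4.6.** For an `(ℓ,L,t)`-list recoverable code `C` with
`t ≤ n` and valid depth-`≤ q` trees `T⁽¹⁾,…,T⁽ʳ⁾`, for every `i < r` with `q·(i+1) ≤ ℓ` and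
`Pr[E_O(T⁽¹⁾,…,T⁽ⁱ⁾)] > 0`, we have
`Pr[E_O(T⁽¹⁾,…,T⁽ⁱ⁺¹⁾) | E_O(T⁽¹⁾,…,T⁽ⁱ⁾)] ≤ L·2^{-(n-t)}`. -/
theorem wellspread_conditional_step
    {n : ℕ} (hn : 1 ≤ n) [Fintype Sym] [DecidableEq Sym]
    (A : Fin n → Finset Sym)
    (hdisj : ∀ i j : Fin n, i ≠ j → Disjoint (A i) (A j))
    (C : Finset (Fin n → Sym)) (hC : ∀ c ∈ C, ∀ i, c i ∈ A i)
    (l L t q r : ℕ) (ht : t ≤ n)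
    (hLR : listRecoverable C l L t)
    (T : Fin r → DTree Sym (Fin n → Sym))
    (hvalid : ∀ i, (T i).Valid)
    (hdepth : ∀ i, (T i).depth ≤ q)
    (i : ℕ) (hir : i < r) (hql : q * (i + 1) ≤ l)
    (hpos : 0 < prOracle (fun O : Sym → Bool => seqEvent t C T i O)) :
    prOracle (fun O : Sym → Bool => seqEvent t C T (i + 1) O ∧ seqEvent t C T i O) /
      prOracle (fun O : Sym → Bool => seqEvent t C T i O) ≤
      (L : ℝ) * (2 : ℝ) ^ (-((n : ℤ) - (t : ℤ))) := by
  classical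
  have hM : (0:ℝ) < (Fintype.card (Sym → Bool) : ℝ) := by
    exact_mod_cast Fintype.card_pos
  set j₀ : Fin r := ⟨i, hir⟩ with hj₀def
  have hj₀ : (j₀ : ℕ) = i := rfl
  have hpr0 : prOracle (fun O : Sym → Bool => seqEvent t C T i O)
      = (((Finset.univ.filter fun O : Sym → Bool => seqEvent t C T i O).card : ℝ))
        / (Fintype.card (Sym → Bool) : ℝ) := by
    unfold prOracle
    congr!
  have hpr1 : prOracle (fun O : Sym → Bool => seqEvent t C T (i+1) O ∧ seqEvent t C T i O)
      = (((Finset.univ.filter fun O : Sym → Bool =>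
            (seqEvent t C T (i+1) O ∧ seqEvent t C T i O)).card : ℝ))
        / (Fintype.card (Sym → Bool) : ℝ) := by
    unfold prOracle
    congr!
  rw [hpr0] at hpos
  set P₀ : Finset (Sym → Bool) :=
    Finset.univ.filter (fun O : Sym → Bool => seqEvent t C T i O) with hP₀def
  set P₁ : Finset (Sym → Bool) :=
    Finset.univ.filter (fun O : Sym → Bool =>
      seqEvent t C T (i+1) O ∧ seqEvent t C T i O) with hP₁def
  have hP₀pos : (0:ℝ) < (P₀.card : ℝ) := by
    by_contra h
    push_neg at h
    have : (P₀.card : ℝ) = 0 := le_antisymm h (by positivity)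
    rw [this, zero_div] at hpos
    exact lt_irrefl _ hpos
  rw [hpr0, hpr1]
  have hdiv : ((P₁.card : ℝ) / (Fintype.card (Sym → Bool) : ℝ))
      / ((P₀.card : ℝ) / (Fintype.card (Sym → Bool) : ℝ)) = (P₁.card : ℝ) / (P₀.card : ℝ) := by
    field_simp
  rw [hdiv, div_le_iff₀ hP₀pos]
  -- convert the power
  set β : ℝ := ((2:ℝ) ^ (n - t))⁻¹ with hβdef
  have hβeq : (2:ℝ) ^ (-((n : ℤ) - (t : ℤ))) = β := by
    have h1 : -((n:ℤ) - (t:ℤ)) = -(((n - t : ℕ) : ℤ)) := by omega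
    rw [h1, zpow_neg, zpow_natCast, hβdef]
  rw [hβeq]
  have hβ0 : (0:ℝ) ≤ β := by positivity
  -- injectivity gives symbol-set cardinality n
  have hcard : ∀ c ∈ C, (symbSet c).card = n := by
    intro c hc
    have hinj : Function.Injective c := by
      intro a b hab
      by_contra hne
      have := hdisj a b hne
      rw [Finset.disjoint_left] at this
      exact this (hC c hc a) (hab ▸ hC c hc b)
    rw [symbSet, Finset.card_image_of_injective _ hinj, Finset.card_univ, Fintype.card_fin]
  -- the canonical representative of each class
  set canon : (Sym → Bool) → (Sym → Bool) :=
    fun O s => if s ∈ Claim46.Spre T j₀ O then O s else false with hcanon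
  have hagree_canon : ∀ O : Sym → Bool, ∀ s ∈ Claim46.Spre T j₀ O, canon O s = O s := by
    intro O s hs
    simp only [hcanon, if_pos hs]
  have hg1 : ∀ O O' : Sym → Bool, (∀ s ∈ Claim46.Spre T j₀ O, O' s = O s) →
      Claim46.Spre T j₀ O' = Claim46.Spre T j₀ O ∧ (seqEvent t C T i O → seqEvent t C T i O') := by
    intro O O' h
    exact ⟨(Claim46.spre_congr T j₀ O O' h).2,
      fun hE => Claim46.seqEvent_congr t C T hvalid i j₀ hj₀ O O' h hE⟩
  have hcanon_idem : ∀ O : Sym → Bool, canon (canon O) = canon O := by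
    intro O
    have hS : Claim46.Spre T j₀ (canon O) = Claim46.Spre T j₀ O :=
      (hg1 O (canon O) (hagree_canon O)).1
    funext s
    by_cases hs : s ∈ Claim46.Spre T j₀ O
    · simp only [hcanon] at hS ⊢; simp only [hS, if_pos hs]
    · simp only [hcanon] at hS ⊢; simp only [hS, if_neg hs]
  set R : Finset (Sym → Bool) := P₀.image canon with hRdef
  have hg2 : ∀ ρ ∈ R, seqEvent t C T i ρ ∧ canon ρ = ρ := by
    intro ρ hρ
    obtain ⟨O, hO, rfl⟩ := Finset.mem_image.1 hρ
    have hE : seqEvent t C T i O := (Finset.mem_filter.1 hO).2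
    exact ⟨(hg1 O (canon O) (hagree_canon O)).2 hE, hcanon_idem O⟩
  have hg3 : ∀ ρ ∈ R, ∀ O ∈ Claim46.classSet (Claim46.Spre T j₀ ρ) ρ,
      seqEvent t C T i O ∧ Claim46.Spre T j₀ O = Claim46.Spre T j₀ ρ ∧ canon O = ρ := by
    intro ρ hρ O hO
    obtain ⟨hEρ, hidem⟩ := hg2 ρ hρ
    have hagr : ∀ s ∈ Claim46.Spre T j₀ ρ, O s = ρ s := Claim46.mem_classSet.1 hO
    obtain ⟨hSeq, htrans⟩ := hg1 ρ O hagr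
    refine ⟨htrans hEρ, hSeq, ?_⟩
    funext s
    by_cases hs : s ∈ Claim46.Spre T j₀ ρ
    · simp only [hcanon, hSeq, if_pos hs]
      exact hagr s hs
    · simp only [hcanon, hSeq, if_neg hs]
      have : canon ρ s = ρ s := by rw [hidem]
      rw [← this]
      simp only [hcanon, if_neg hs]
  have hg4 : ∀ O ∈ P₀, canon O ∈ R ∧ O ∈ Claim46.classSet (Claim46.Spre T j₀ (canon O)) (canon O) := by
    intro O hO
    refine ⟨Finset.mem_image.2 ⟨O, hO, rfl⟩, ?_⟩
    rw [Claim46.mem_classSet]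
    have hS : Claim46.Spre T j₀ (canon O) = Claim46.Spre T j₀ O :=
      (hg1 O (canon O) (hagree_canon O)).1
    rw [hS]
    intro s hs
    exact (hagree_canon O s hs).symm
  have hP₀eq : P₀ = R.biUnion (fun ρ => Claim46.classSet (Claim46.Spre T j₀ ρ) ρ) := by
    ext O
    constructor
    · intro hO
      obtain ⟨h1, h2⟩ := hg4 O hO
      exact Finset.mem_biUnion.2 ⟨canon O, h1, h2⟩
    · intro hO
      obtain ⟨ρ, hρ, hOc⟩ := Finset.mem_biUnion.1 hO
      exact Finset.mem_filter.2 ⟨Finset.mem_univ _, (hg3 ρ hρ O hOc).1⟩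
  have hdisjR : ∀ ρ₁ ∈ R, ∀ ρ₂ ∈ R, ρ₁ ≠ ρ₂ →
      Disjoint (Claim46.classSet (Claim46.Spre T j₀ ρ₁) ρ₁)
        (Claim46.classSet (Claim46.Spre T j₀ ρ₂) ρ₂) := by
    intro ρ₁ h₁ ρ₂ h₂ hne
    rw [Finset.disjoint_left]
    intro O hO1 hO2
    exact hne (((hg3 ρ₁ h₁ O hO1).2.2).symm.trans ((hg3 ρ₂ h₂ O hO2).2.2))
  have hcardP₀ : P₀.card = ∑ ρ ∈ R, (Claim46.classSet (Claim46.Spre T j₀ ρ) ρ).card := by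
    rw [hP₀eq]
    exact Finset.card_biUnion hdisjR
  have hP₁sub : P₁ ⊆ R.biUnion (fun ρ => P₁ ∩ Claim46.classSet (Claim46.Spre T j₀ ρ) ρ) := by
    intro O hO
    have hO₀ : O ∈ P₀ := by
      rw [hP₀def, Finset.mem_filter]
      exact ⟨Finset.mem_univ _, ((Finset.mem_filter.1 hO).2).2⟩
    obtain ⟨h1, h2⟩ := hg4 O hO₀
    exact Finset.mem_biUnion.2 ⟨canon O, h1, Finset.mem_inter.2 ⟨hO, h2⟩⟩
  have hcardP₁ : P₁.card ≤ ∑ ρ ∈ R, (P₁ ∩ Claim46.classSet (Claim46.Spre T j₀ ρ) ρ).card :=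
    le_trans (Finset.card_le_card hP₁sub) (Finset.card_biUnion_le)
  -- per-class bound
  have hclass : ∀ ρ ∈ R, ((P₁ ∩ Claim46.classSet (Claim46.Spre T j₀ ρ) ρ).card : ℝ)
      ≤ (L : ℝ) * β * ((Claim46.classSet (Claim46.Spre T j₀ ρ) ρ).card : ℝ) := by
    intro ρ hρ
    have hcsub : P₁ ∩ Claim46.classSet (Claim46.Spre T j₀ ρ) ρ
        ⊆ (Claim46.classSet (Claim46.Spre T j₀ ρ) ρ).filter
            (Claim46.Good C t (Claim46.Spre T j₀ ρ) (T j₀) (Claim46.Spre T j₀ ρ)) := by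
      intro O hO
      obtain ⟨hO₁, hOc⟩ := Finset.mem_inter.1 hO
      obtain ⟨hE1, hEi⟩ := (Finset.mem_filter.1 hO₁).2
      have hSOρ : Claim46.Spre T j₀ O = Claim46.Spre T j₀ ρ := (hg3 ρ hρ O hOc).2.1
      -- extract codeZero membership of the (i+1)-st output
      have hIic : Finset.univ.filter (fun j : Fin r => (j : ℕ) < i + 1) = Finset.Iic j₀ := by
        ext j
        simp only [Finset.mem_filter, Finset.mem_univ, true_and, Finset.mem_Iic, Fin.le_def, hj₀]
        omega
      have hXcard : ((Finset.Iic j₀).image fun j => (T j).eval O).card ≤ i + 1 := by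
        refine le_trans (Finset.card_image_le) ?_
        rw [Fin.card_Iic]
      have hE12 := hE1.2
      rw [hIic] at hE12
      have hXZ : ((Finset.Iic j₀).image fun j => (T j).eval O) ∩ codeZero C O
          = ((Finset.Iic j₀).image fun j => (T j).eval O) :=
        Finset.eq_of_subset_of_card_le Finset.inter_subset_left (by omega)
      have hXsub : ((Finset.Iic j₀).image fun j => (T j).eval O) ⊆ codeZero C O := by
        rw [← hXZ]
        exact Finset.inter_subset_right
      have hcmem : (T j₀).eval O ∈ codeZero C O := by
        apply hXsub
        exact Finset.mem_image.2 ⟨j₀, Finset.mem_Iic.2 (le_refl _), rfl⟩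
      obtain ⟨hcC, hczero⟩ := Finset.mem_filter.1 hcmem
      have hwsp : ¬ tQueried t (Claim46.Spre T j₀ ρ) ((T j₀).eval O) := by
        rw [← hSOρ]
        exact hE1.1 j₀ (by rw [hj₀]; omega)
      refine Finset.mem_filter.2 ⟨hOc, hcC, hwsp, hczero, ?_⟩
      intro s hs
      obtain ⟨k, _, rfl⟩ := Finset.mem_image.1 hs
      exact Finset.mem_union_right _ (hvalid j₀ O k)
    have hsize : (Claim46.Spre T j₀ ρ).card + (T j₀).depth ≤ l := by
      have h1 : (Claim46.Spre T j₀ ρ).card ≤ ∑ a ∈ Finset.Iio j₀, ((T a).path ρ).card :=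
        Finset.card_biUnion_le
      have h2 : ∑ a ∈ Finset.Iio j₀, ((T a).path ρ).card ≤ ∑ _a ∈ Finset.Iio j₀, q :=
        Finset.sum_le_sum (fun a _ => le_trans (Claim46.card_path_le_depth _ _) (hdepth a))
      have h3 : ∑ _a ∈ Finset.Iio j₀, q = i * q := by
        rw [Finset.sum_const, Fin.card_Iio, smul_eq_mul]
      have h4 : (T j₀).depth ≤ q := hdepth j₀
      have h5 : q * (i + 1) = i * q + q := by ring
      omega
    have hcore := Claim46.core C t l L ht hLR hcard (Claim46.Spre T j₀ ρ) (T j₀)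
      (Claim46.Spre T j₀ ρ) ρ (Finset.Subset.refl _) hsize
    have hphile : Claim46.phi C t L (Claim46.Spre T j₀ ρ) (Claim46.Spre T j₀ ρ) ρ
        ≤ (L : ℝ) * β := Claim46.phi_le
    have hccast : (0:ℝ) ≤ ((Claim46.classSet (Claim46.Spre T j₀ ρ) ρ).card : ℝ) := Nat.cast_nonneg _
    calc ((P₁ ∩ Claim46.classSet (Claim46.Spre T j₀ ρ) ρ).card : ℝ)
        ≤ (((Claim46.classSet (Claim46.Spre T j₀ ρ) ρ).filter
            (Claim46.Good C t (Claim46.Spre T j₀ ρ) (T j₀) (Claim46.Spre T j₀ ρ))).card : ℝ) := by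
          exact_mod_cast Finset.card_le_card hcsub
      _ ≤ Claim46.phi C t L (Claim46.Spre T j₀ ρ) (Claim46.Spre T j₀ ρ) ρ
            * ((Claim46.classSet (Claim46.Spre T j₀ ρ) ρ).card : ℝ) := hcore
      _ ≤ (L : ℝ) * β * ((Claim46.classSet (Claim46.Spre T j₀ ρ) ρ).card : ℝ) :=
          mul_le_mul_of_nonneg_right hphile hccast
  -- sum up
  calc (P₁.card : ℝ)
      ≤ ((∑ ρ ∈ R, (P₁ ∩ Claim46.classSet (Claim46.Spre T j₀ ρ) ρ).card : ℕ) : ℝ) := by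
        exact_mod_cast hcardP₁
    _ = ∑ ρ ∈ R, ((P₁ ∩ Claim46.classSet (Claim46.Spre T j₀ ρ) ρ).card : ℝ) := by
        push_cast; rfl
    _ ≤ ∑ ρ ∈ R, (L : ℝ) * β * ((Claim46.classSet (Claim46.Spre T j₀ ρ) ρ).card : ℝ) :=
        Finset.sum_le_sum hclass
    _ = (L : ℝ) * β * ∑ ρ ∈ R, ((Claim46.classSet (Claim46.Spre T j₀ ρ) ρ).card : ℝ) := by
        rw [Finset.mul_sum]
    _ = (L : ℝ) * β * (P₀.card : ℝ) := by
        congr 1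
        rw [hcardP₀]
        push_cast
        ring
end

section
/- Claim 4.7 (every successful forest contains a well-spread sequence): Let C ⊆ Σ₁ × ⋯ × Σₙ be an (ℓ,L,t)-list recoverable code with t ≤ n. Let F = {T⁽¹⁾,…,T⁽ᵐ⁾} be a forest of valid decision trees, each of depth at most q, which (L+1)-succeeds on an oracle O : Σ → {0,1}, and let r ≥ 1 satisfy (r−1)·q ≤ ℓ. Then there exist indices i₁,…,i_r ∈ {1,…,m} such that the sequence T⁽ⁱ¹⁾,…,T⁽ⁱʳ⁾ is t-well-spread on O and outputs r distinct elements of C_O (i.e., r-succeeds on O). -/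
open Finset
open scoped Classical

variable {Sym : Type}

/-- A sequence of trees `T⁽¹⁾,…,T⁽ʳ⁾` is `t`-well-spread on `O` if for each `i`, the output
`T⁽ⁱ⁺¹⁾(O)` is not `t`-queried by `S_i := ∪_{j ≤ i} path(T⁽ʲ⁾,O)`, the set of symbols queried
by the preceding trees. -/
def wellSpread {n r : ℕ} [DecidableEq Sym] (t : ℕ)
    (T : Fin r → DTree Sym (Fin n → Sym)) (O : Sym → Bool) : Prop :=
  ∀ i : Fin r, ¬ tQueried t ((Finset.Iio i).biUnion fun j => (T j).path O) ((T i).eval O)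

/-! A greedy argument. After choosing `k` trees, the symbols they have queried form a set `S` of
size at most `k q ≤ ℓ`, so list recoverability leaves at most `L` codewords `t`-queried by `S`;
since the forest outputs `L + 1` distinct elements of `C_O`, one of them, say `T⁽ʲ⁾(O)`, is not
`t`-queried by `S`, and `T⁽ʲ⁾` extends the sequence. The outputs are automatically distinct:
a valid tree queries all `n` (pairwise distinct) symbols of its output, so a repeated output
would be `n`-queried, hence `t`-queried, by the earlier paths. -/

lemma DTree.card_path_le_depth {σ β : Type} [DecidableEq σ] (T : DTree σ β) (O : σ → Bool) :
    (T.path O).card ≤ T.depth := by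
  induction T with
  | leaf b => simp [DTree.path]
  | node s t0 t1 ih0 ih1 =>
    simp only [DTree.path, DTree.depth]
    refine (card_insert_le _ _).trans (Nat.succ_le_succ ?_)
    split_ifs
    · exact ih1.trans (le_max_right _ _)
    · exact ih0.trans (le_max_left _ _)

section

variable [DecidableEq Sym] {n : ℕ}

lemma DTree.Valid.symbSet_eval_subset_path {T : DTree Sym (Fin n → Sym)} (hT : T.Valid)
    (O : Sym → Bool) : symbSet (T.eval O) ⊆ T.path O := by
  intro s hs
  obtain ⟨i, -, rfl⟩ := mem_image.mp hs
  exact hT O i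

lemma card_symbSet_of_pairwise_disjoint {A : Fin n → Finset Sym}
    (hA : Pairwise fun i j => Disjoint (A i) (A j)) {c : Fin n → Sym} (hc : ∀ i, c i ∈ A i) :
    (symbSet c).card = n := by
  have hinj : Function.Injective c := fun i j hij => by
    by_contra hne
    exact disjoint_left.mp (hA hne) (hc i) (hij ▸ hc j)
  rw [symbSet, card_image_of_injective _ hinj, card_univ, Fintype.card_fin]

lemma tQueried_of_symbSet_subset {t : ℕ} {S : Finset Sym} {c : Fin n → Sym}
    (hcS : symbSet c ⊆ S) (ht : t ≤ (symbSet c).card) : tQueried t S c := by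
  rwa [tQueried, inter_eq_left.mpr hcS]

lemma listRecoverable.exists_not_tQueried {C : Finset (Fin n → Sym)} {l L t : ℕ}
    (hC : listRecoverable C l L t) {S : Finset Sym} (hS : S.card ≤ l)
    {E : Finset (Fin n → Sym)} (hEC : E ⊆ C) (hE : L < E.card) : ∃ c ∈ E, ¬ tQueried t S c := by
  by_contra! h
  have hsub : E ⊆ C.filter fun c => tQueried t S c := fun c hc => mem_filter.mpr ⟨hEC hc, h c hc⟩
  exact (hE.trans_le (card_le_card hsub)).not_ge (hC S hS)

lemma wellSpread_snoc {r t : ℕ} {U : Fin r → DTree Sym (Fin n → Sym)}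
    {V : DTree Sym (Fin n → Sym)} {O : Sym → Bool} :
    wellSpread t (Fin.snoc (α := fun _ => DTree Sym (Fin n → Sym)) U V) O ↔
      wellSpread t U O ∧ ¬ tQueried t (univ.biUnion fun j => (U j).path O) (V.eval O) := by
  simp only [wellSpread, Fin.forall_fin_succ', Fin.snoc_castSucc, Fin.snoc_last,
    Fin.Iio_castSucc, Fin.Iio_last_eq_map, map_eq_image, image_biUnion,
    Fin.castSuccEmb_apply]

lemma wellSpread.injective_eval {r t : ℕ} {U : Fin r → DTree Sym (Fin n → Sym)}
    {O : Sym → Bool} (hU : wellSpread t U O) (hvalid : ∀ j, (U j).Valid)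
    (hcard : ∀ j, t ≤ (symbSet ((U j).eval O)).card) :
    Function.Injective fun j => (U j).eval O := by
  refine Function.Injective.of_lt_imp_ne fun i j hij heq => hU j ?_
  rw [← heq]
  refine tQueried_of_symbSet_subset ?_ (hcard i)
  exact ((hvalid i).symbSet_eval_subset_path O).trans
    (subset_biUnion_of_mem (fun k => (U k).path O) (mem_Iio.mpr hij))

theorem exists_wellSpread_of_listRecoverable {l L t q m : ℕ}
    {C : Finset (Fin n → Sym)} (hLR : listRecoverable C l L t)
    {T : Fin m → DTree Sym (Fin n → Sym)} (hdepth : ∀ j, (T j).depth ≤ q) {O : Sym → Bool}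
    (hsucc : L + 1 ≤ ((univ.image fun j => (T j).eval O) ∩ codeZero C O).card) :
    ∀ k, (k - 1) * q ≤ l → ∃ idx : Fin k → Fin m,
      wellSpread t (fun j => T (idx j)) O ∧ ∀ j, (T (idx j)).eval O ∈ codeZero C O
  | 0, _ => ⟨Fin.elim0, fun j => j.elim0, fun j => j.elim0⟩
  | k + 1, hk => by
    obtain ⟨idx, hspread, hzero⟩ := exists_wellSpread_of_listRecoverable hLR hdepth hsucc k
      ((Nat.mul_le_mul_right q (by omega)).trans hk)
    have hS : (univ.biUnion fun j => (T (idx j)).path O).card ≤ l := by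
      refine (card_biUnion_le_card_mul _ _ q fun j _ =>
        ((T (idx j)).card_path_le_depth O).trans (hdepth _)).trans ?_
      simpa using hk
    obtain ⟨c, hcE, hc⟩ := hLR.exists_not_tQueried hS
      (inter_subset_right.trans (filter_subset _ _)) hsucc
    obtain ⟨j, -, rfl⟩ := mem_image.mp (mem_inter.mp hcE).1
    refine ⟨Fin.snoc idx j, ?_, Fin.lastCases ?_ fun i => ?_⟩
    · rw [← Function.comp_def T, Fin.comp_snoc, wellSpread_snoc]
      exact ⟨hspread, hc⟩
    · rw [Fin.snoc_last]
      exact (mem_inter.mp hcE).2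
    · rw [Fin.snoc_castSucc]
      exact hzero i

end

theorem successful_forest_has_wellspread_sequence_general
    {n : ℕ} [DecidableEq Sym]
    (A : Fin n → Finset Sym)
    (hdisj : ∀ i j : Fin n, i ≠ j → Disjoint (A i) (A j))
    (C : Finset (Fin n → Sym)) (hC : ∀ c ∈ C, ∀ i, c i ∈ A i)
    (l L t q m r : ℕ) (ht : t ≤ n) (hrq : (r - 1) * q ≤ l)
    (hLR : listRecoverable C l L t)
    (T : Fin m → DTree Sym (Fin n → Sym))
    (hvalid : ∀ j, (T j).Valid)
    (hdepth : ∀ j, (T j).depth ≤ q)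
    (O : Sym → Bool)
    (hsucc : L + 1 ≤ ((Finset.univ.image fun j => (T j).eval O) ∩ codeZero C O).card) :
    ∃ idx : Fin r → Fin m,
      wellSpread t (fun j => T (idx j)) O ∧
        r ≤ ((Finset.univ.image fun j : Fin r => (T (idx j)).eval O) ∩ codeZero C O).card := by
  obtain ⟨idx, hspread, hzero⟩ := exists_wellSpread_of_listRecoverable hLR hdepth hsucc r hrq
  have hinj : Function.Injective fun j => (T (idx j)).eval O :=
    hspread.injective_eval (fun j => hvalid (idx j)) fun j =>
      ht.trans_eq (card_symbSet_of_pairwise_disjoint hdisj (hC _ (mem_filter.mp (hzero j)).1)).symm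
  refine ⟨idx, hspread, ?_⟩
  rw [inter_eq_left.mpr (image_subset_iff.mpr fun j _ => hzero j),
    card_image_of_injective _ hinj, card_univ, Fintype.card_fin]

/-- **Claim 4.7 (every successful forest contains a well-spread sequence).** If a forest
`F = {T⁽¹⁾,…,T⁽ᵐ⁾}` of valid depth-`≤ q` trees `(L+1)`-succeeds on an oracle `O`, and
`r ≥ 1` satisfies `(r−1)·q ≤ ℓ`, then there are indices `i₁,…,i_r ∈ [m]` such that the
sequence `T⁽ⁱ¹⁾,…,T⁽ⁱʳ⁾` is `t`-well-spread on `O` and outputs `r` distinct elements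
of `C_O`. -/
theorem successful_forest_has_wellspread_sequence
    {n : ℕ} (hn : 1 ≤ n) [Fintype Sym] [DecidableEq Sym]
    (A : Fin n → Finset Sym)
    (hdisj : ∀ i j : Fin n, i ≠ j → Disjoint (A i) (A j))
    (C : Finset (Fin n → Sym)) (hC : ∀ c ∈ C, ∀ i, c i ∈ A i)
    (l L t q m r : ℕ) (ht : t ≤ n) (hr : 1 ≤ r) (hrq : (r - 1) * q ≤ l)
    (hLR : listRecoverable C l L t)
    (T : Fin m → DTree Sym (Fin n → Sym))
    (hvalid : ∀ j, (T j).Valid)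
    (hdepth : ∀ j, (T j).depth ≤ q)
    (O : Sym → Bool)
    (hsucc : L + 1 ≤ ((Finset.univ.image fun j => (T j).eval O) ∩ codeZero C O).card) :
    ∃ idx : Fin r → Fin m,
      wellSpread t (fun j => T (idx j)) O ∧
        r ≤ ((Finset.univ.image fun j : Fin r => (T (idx j)).eval O) ∩ codeZero C O).card :=
  successful_forest_has_wellspread_sequence_general A hdisj C hC l L t q m r ht hrq hLR T hvalid
    hdepth O hsucc
end

section
/- Claim 5.2 (pairwise independent draws contain many unique elements): Let m ≥ 1, ε > 0, and let H ⊆ {0,1}ⁿ be a set with |H| ≥ m. Let D be any probability distribution on {0,1}ⁿ whose total variation distance to the uniform distribution on H is at most 1 − ε. If x⁽¹⁾,…,x⁽ᵐ⁾ are pairwise independent random variables each with marginal distribution D, then the expected number of distinct elements of H appearing among x⁽¹⁾,…,x⁽ᵐ⁾ is at least mε/2; in particular, with nonzero probability x⁽¹⁾,…,x⁽ᵐ⁾ contain at least mε/2 distinct elements of H. -/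
open MeasureTheory ProbabilityTheory
open scoped Classical

section helpers

lemma bonf_pointwise (s : ℕ) : (3*(s:ℝ) - (s:ℝ)^2)/2 ≤ if 0 < s then 1 else 0 := by
  rcases Nat.lt_or_ge s 2 with h | h
  · interval_cases s <;> norm_num
  · have hs : (2:ℝ) ≤ s := by exact_mod_cast h
    rw [if_pos (by omega)]
    nlinarith

lemma union_bound {Ω : Type} [MeasurableSpace Ω] (μ : Measure Ω) [IsProbabilityMeasure μ]
    (m : ℕ) (E : Fin m → Set Ω) (hE : ∀ i, MeasurableSet (E i)) (p : ℝ)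
    (hp : ∀ i, (μ (E i)).toReal = p)
    (hind : ∀ i j, i ≠ j → (μ (E i ∩ E j)).toReal = p^2) (T : Finset (Fin m)) :
    (T.card : ℝ)*p - ((T.card:ℝ)*((T.card:ℝ)-1))/2 * p^2 ≤ (μ (⋃ i ∈ T, E i)).toReal := by
  set k : ℝ := (T.card : ℝ) with hk
  set f : Fin m → Ω → ℝ := fun i => (E i).indicator 1 with hf
  have hInt : ∀ i, Integrable (f i) μ := fun i =>
    (integrable_indicator_iff (hE i)).2 (integrableOn_const (measure_ne_top μ _))
  have hIntf : ∀ i, ∫ ω, f i ω ∂μ = p := fun i => by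
    rw [hf]; simp only; rw [integral_indicator_one (hE i)]; exact hp i
  have hprod : ∀ i j, (fun ω => f i ω * f j ω) = (E i ∩ E j).indicator 1 := by
    intro i j; funext ω
    by_cases hi : ω ∈ E i <;> by_cases hj : ω ∈ E j <;>
      simp [hf, Set.indicator_apply, hi, hj]
  have hIntprod : ∀ i j, Integrable (fun ω => f i ω * f j ω) μ := fun i j => by
    rw [hprod]
    exact (integrable_indicator_iff ((hE i).inter (hE j))).2
      (integrableOn_const (measure_ne_top μ _))
  have hIprod : ∀ i j, i ≠ j → ∫ ω, f i ω * f j ω ∂μ = p^2 := fun i j hij => by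
    rw [hprod, integral_indicator_one ((hE i).inter (hE j))]; exact hind i j hij
  have hIprodd : ∀ i, ∫ ω, f i ω * f i ω ∂μ = p := fun i => by
    rw [hprod, Set.inter_self, integral_indicator_one (hE i)]; exact hp i
  -- sum S
  have hIntS : Integrable (fun ω => ∑ i ∈ T, f i ω) μ :=
    integrable_finset_sum T (fun i _ => hInt i)
  have hIS : ∫ ω, ∑ i ∈ T, f i ω ∂μ = k * p := by
    rw [integral_finset_sum T (fun i _ => hInt i)]
    simp [hIntf, hk, mul_comm]
  have hsq : ∀ ω, (∑ i ∈ T, f i ω)^2 = ∑ i ∈ T, ∑ j ∈ T, f i ω * f j ω := fun ω => by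
    rw [sq, Finset.sum_mul_sum]
  have hIntS2 : Integrable (fun ω => (∑ i ∈ T, f i ω)^2) μ := by
    simp_rw [hsq]
    exact integrable_finset_sum T (fun i _ => integrable_finset_sum T (fun j _ => hIntprod i j))
  have hIS2 : ∫ ω, (∑ i ∈ T, f i ω)^2 ∂μ = k * p + k*(k-1)*p^2 := by
    simp_rw [hsq]
    rw [integral_finset_sum T (fun i _ => integrable_finset_sum T (fun j _ => hIntprod i j))]
    have : ∀ i ∈ T, ∫ ω, ∑ j ∈ T, f i ω * f j ω ∂μ = p + (k-1)*p^2 := by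
      intro i hi
      rw [integral_finset_sum T (fun j _ => hIntprod i j),
        ← Finset.add_sum_erase _ _ hi, hIprodd i]
      congr 1
      rw [Finset.sum_congr rfl (fun j hj => hIprod i j (Ne.symm (Finset.ne_of_mem_erase hj))),
        Finset.sum_const, Finset.card_erase_of_mem hi, nsmul_eq_mul]
      congr 1
      have h1 : 1 ≤ T.card := Finset.card_pos.2 ⟨i, hi⟩
      push_cast [Nat.cast_sub h1]
      ring
    rw [Finset.sum_congr rfl this, Finset.sum_const, nsmul_eq_mul]
    ring
  -- the union and its indicator
  have hU : MeasurableSet (⋃ i ∈ T, E i) :=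
    MeasurableSet.biUnion T.countable_toSet (fun i _ => hE i)
  have hIntU : Integrable ((⋃ i ∈ T, E i).indicator (1 : Ω → ℝ)) μ :=
    (integrable_indicator_iff hU).2 (integrableOn_const (measure_ne_top μ _))
  -- pointwise bound
  have hpt : ∀ ω, (3*(∑ i ∈ T, f i ω) - (∑ i ∈ T, f i ω)^2)/2 ≤
      (⋃ i ∈ T, E i).indicator (1 : Ω → ℝ) ω := by
    intro ω
    have hSc : ∑ i ∈ T, f i ω = ((T.filter fun i => ω ∈ E i).card : ℝ) := by
      rw [← Finset.sum_boole]
      exact Finset.sum_congr rfl (fun i _ => by simp [hf, Set.indicator_apply])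
    rw [hSc]
    have hmem : ω ∈ (⋃ i ∈ T, E i) ↔ 0 < (T.filter fun i => ω ∈ E i).card := by
      simp [Finset.card_pos, Finset.filter_nonempty_iff, Set.mem_iUnion]
    by_cases hω : ω ∈ (⋃ i ∈ T, E i)
    · have := bonf_pointwise (T.filter fun i => ω ∈ E i).card
      rw [if_pos (hmem.1 hω)] at this
      simpa [Set.indicator_apply, hω] using this
    · have := bonf_pointwise (T.filter fun i => ω ∈ E i).card
      rw [if_neg (fun h => hω (hmem.2 h))] at this
      simpa [Set.indicator_apply, hω] using this
  have hmono : ∫ ω, (3*(∑ i ∈ T, f i ω) - (∑ i ∈ T, f i ω)^2)/2 ∂μ ≤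
      ∫ ω, (⋃ i ∈ T, E i).indicator (1 : Ω → ℝ) ω ∂μ := by
    apply integral_mono _ hIntU hpt
    exact (((hIntS.const_mul 3).sub hIntS2).div_const 2)
  rw [integral_indicator_one hU] at hmono
  calc k*p - (k*(k-1))/2 * p^2
      = (3*(k*p) - (k*p + k*(k-1)*p^2))/2 := by ring
    _ = ∫ ω, (3*(∑ i ∈ T, f i ω) - (∑ i ∈ T, f i ω)^2)/2 ∂μ := by
        rw [integral_div, integral_sub (hIntS.const_mul 3) hIntS2, integral_const_mul, hIS, hIS2]
    _ ≤ _ := hmono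

lemma key_bound {Ω : Type} [MeasurableSpace Ω] (μ : Measure Ω) [IsProbabilityMeasure μ]
    (m : ℕ) (hm : 1 ≤ m) (E : Fin m → Set Ω) (hE : ∀ i, MeasurableSet (E i)) (p : ℝ)
    (hp : ∀ i, (μ (E i)).toReal = p)
    (hind : ∀ i j, i ≠ j → (μ (E i ∩ E j)).toReal = p^2) :
    (m:ℝ)/2 * min p (1/m) ≤ (μ (⋃ i, E i)).toReal := by
  have hm0 : (0:ℝ) < m := by exact_mod_cast hm
  have hp0 : 0 ≤ p := by
    rw [← hp ⟨0, hm⟩]; exact ENNReal.toReal_nonneg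
  have hmonoU : ∀ T : Finset (Fin m), (μ (⋃ i ∈ T, E i)).toReal ≤ (μ (⋃ i, E i)).toReal := by
    intro T
    exact ENNReal.toReal_mono (measure_ne_top μ _)
      (measure_mono (Set.iUnion₂_subset fun i _ => Set.subset_iUnion E i))
  rcases le_or_gt p (1/m) with hple | hpgt
  · -- use all m variables
    have hub := union_bound μ m E hE p hp hind Finset.univ
    rw [Finset.card_univ, Fintype.card_fin] at hub
    have hmp : (m:ℝ) * p ≤ 1 := by
      rw [le_div_iff₀ hm0] at hple; linarith [hple]
    rw [min_eq_left hple]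
    refine le_trans ?_ (le_trans hub (hmonoU _))
    nlinarith [mul_nonneg (Nat.cast_nonneg (α := ℝ) m) hp0]
  · -- use k = ⌈1/p⌉ variables
    have hppos : 0 < p := lt_trans (by positivity) hpgt
    set k : ℕ := ⌈1/p⌉₊ with hkdef
    have hk1 : 1 ≤ k := Nat.one_le_iff_ne_zero.2 (by
      simp [hkdef, Nat.ceil_eq_zero, not_le]
      positivity)
    have hkm : k ≤ m := by
      apply Nat.ceil_le.2
      rw [div_le_iff₀ hppos]
      rw [div_lt_iff₀ hm0] at hpgt
      nlinarith
    have hkm' : k ≤ (Finset.univ : Finset (Fin m)).card := by simpa using hkm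
    obtain ⟨T, -, hTcard⟩ := Finset.exists_subset_card_eq hkm'
    have hub := union_bound μ m E hE p hp hind T
    rw [hTcard] at hub
    have hK1 : 1 ≤ (k:ℝ) * p := by
      have := Nat.le_ceil (1/p)
      rw [← hkdef] at this
      rw [div_le_iff₀ hppos] at this
      linarith [this]
    have hK2 : ((k:ℝ) - 1) * p ≤ 1 := by
      have := Nat.ceil_lt_add_one (le_of_lt (by positivity : (0:ℝ) < 1/p))
      rw [← hkdef] at this
      have h2 : (k:ℝ) - 1 < 1/p := by linarith
      have h3 : ((k:ℝ) - 1) * p < (1/p) * p := mul_lt_mul_of_pos_right h2 hppos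
      rw [one_div, inv_mul_cancel₀ (ne_of_gt hppos)] at h3
      linarith
    have hmin : min p (1/(m:ℝ)) = 1/m := min_eq_right (le_of_lt hpgt)
    rw [hmin]
    have : (m:ℝ)/2 * (1/m) = 1/2 := by field_simp
    rw [this]
    refine le_trans ?_ (le_trans hub (hmonoU _))
    nlinarith [mul_nonneg (Nat.cast_nonneg (α := ℝ) k) hp0]


lemma sum_min_bound {n : ℕ} (ε : ℝ) (H : Finset (Fin n → Bool)) (hne : H.Nonempty)
    (D : PMF (Fin n → Bool))
    (htv : (1 / 2 : ℝ) * ∑ x : Fin n → Bool,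
        |(D x).toReal - ((PMF.uniformOfFinset H hne) x).toReal| ≤ 1 - ε) :
    ε ≤ ∑ x ∈ H, min (D x).toReal ((H.card : ℝ))⁻¹ := by
  set p : (Fin n → Bool) → ℝ := fun x => (D x).toReal with hpdef
  set u : (Fin n → Bool) → ℝ := fun x => ((PMF.uniformOfFinset H hne) x).toReal with hudef
  have hcard0 : (0:ℝ) < H.card := by exact_mod_cast Finset.card_pos.2 hne
  have hu : ∀ x, u x = if x ∈ H then ((H.card:ℝ))⁻¹ else 0 := by
    intro x
    rw [hudef]
    simp only [PMF.uniformOfFinset_apply]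
    split_ifs with h <;> simp [ENNReal.toReal_inv]
  have hp1 : ∑ x, p x = 1 := by
    have hD1 : ∑ x, D x = 1 := by rw [← tsum_fintype (L := SummationFilter.unconditional _)]; exact D.tsum_coe
    rw [hpdef]
    simp only
    rw [← ENNReal.toReal_sum (fun a _ => PMF.apply_ne_top D a), hD1, ENNReal.toReal_one]
  have hpnn : ∀ x, 0 ≤ p x := fun x => ENNReal.toReal_nonneg
  have hsum_uH : ∑ x ∈ H, u x = 1 := by
    rw [Finset.sum_congr rfl (fun x hx => by rw [hu x, if_pos hx])]
    rw [Finset.sum_const, nsmul_eq_mul, mul_inv_cancel₀ (ne_of_gt hcard0)]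
  -- split the absolute sum
  have hsplit : ∑ x ∈ H, |p x - u x| + ∑ x ∈ Hᶜ, |p x - u x|
      = ∑ x, |p x - u x| := Finset.sum_add_sum_compl H _
  have hsplitp : ∑ x ∈ H, p x + ∑ x ∈ Hᶜ, p x = ∑ x, p x := Finset.sum_add_sum_compl H _
  have houtH : ∑ x ∈ Hᶜ, |p x - u x| = ∑ x ∈ Hᶜ, p x := by
    refine Finset.sum_congr rfl (fun x hx => ?_)
    have hx' : x ∉ H := Finset.mem_compl.1 hx
    rw [hu x, if_neg hx', sub_zero, abs_of_nonneg (hpnn x)]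
  have hmin : ∀ x ∈ H, min (p x) ((H.card:ℝ))⁻¹ = (p x + u x - |p x - u x|)/2 := by
    intro x hx
    have h1 := max_sub_min_eq_abs (p x) ((H.card:ℝ))⁻¹
    have h2 := min_add_max (p x) ((H.card:ℝ))⁻¹
    rw [hu x, if_pos hx, abs_sub_comm]
    linarith
  rw [Finset.sum_congr rfl hmin]
  have e1 : ∑ x ∈ H, (p x + u x - |p x - u x|)/2
      = (∑ x ∈ H, p x + ∑ x ∈ H, u x - ∑ x ∈ H, |p x - u x|)/2 := by
    rw [← Finset.sum_div, Finset.sum_sub_distrib, Finset.sum_add_distrib]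
  rw [e1, hsum_uH]
  linarith [htv, hsplit, hsplitp, hp1, houtH]

end helpers

/-- **Claim 5.2 (pairwise independent draws contain many unique elements).**
Let `H ⊆ {0,1}ⁿ` with `|H| ≥ m` and let `D` be a distribution on `{0,1}ⁿ` whose total
variation distance to `Unif(H)` is at most `1 − ε`. If `x⁽¹⁾,…,x⁽ᵐ⁾` are pairwise independent
random variables each with marginal distribution `D`, then the expected number of distinct
elements of `H` appearing among them is at least `mε/2`; in particular, with nonzero
probability they contain at least `mε/2` distinct elements of `H`. -/
theorem pairwise_independent_many_unique
    {Ω : Type} [MeasurableSpace Ω] (μ : Measure Ω) [IsProbabilityMeasure μ]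
    (n m : ℕ) (hm : 1 ≤ m) (ε : ℝ) (hε : 0 < ε)
    (H : Finset (Fin n → Bool)) (hne : H.Nonempty) (hHm : m ≤ H.card)
    (D : PMF (Fin n → Bool))
    (htv : (1 / 2 : ℝ) * ∑ x : Fin n → Bool,
        |(D x).toReal - ((PMF.uniformOfFinset H hne) x).toReal| ≤ 1 - ε)
    (X : Fin m → Ω → (Fin n → Bool))
    (hmeas : ∀ i, Measurable (X i))
    (hmarg : ∀ i, Measure.map (X i) μ = D.toMeasure)
    (hpair : ∀ i j, i ≠ j → IndepFun (X i) (X j) μ) :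
    (m : ℝ) * ε / 2 ≤ (∫ ω, ((H.filter fun x => ∃ i, X i ω = x).card : ℝ) ∂μ) ∧
      μ {ω | (m : ℝ) * ε / 2 ≤ ((H.filter fun x => ∃ i, X i ω = x).card : ℝ)} ≠ 0 := by
  have hm0 : (0:ℝ) < m := by exact_mod_cast hm
  set U : (Fin n → Bool) → Set Ω := fun x => {ω | ∃ i, X i ω = x} with hUdef
  have hUeq : ∀ x, U x = ⋃ i, X i ⁻¹' {x} := by
    intro x; ext ω; simp [hUdef, Set.mem_iUnion]
  have hUmeas : ∀ x, MeasurableSet (U x) := by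
    intro x; rw [hUeq]
    exact MeasurableSet.iUnion (fun i => hmeas i (measurableSet_singleton x))
  have hmu : ∀ (i : Fin m) (x : Fin n → Bool), μ (X i ⁻¹' {x}) = D x := by
    intro i x
    rw [← Measure.map_apply (hmeas i) (measurableSet_singleton x), hmarg i,
      PMF.toMeasure_apply_singleton _ _ (measurableSet_singleton x)]
  -- the key per-element bound
  have hkey : ∀ x, (m:ℝ)/2 * min ((D x).toReal) (1/m) ≤ (μ (U x)).toReal := by
    intro x
    rw [hUeq]
    refine key_bound μ m hm (fun i => X i ⁻¹' {x})
      (fun i => hmeas i (measurableSet_singleton x)) ((D x).toReal)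
      (fun i => by rw [hmu i x]) (fun i j hij => ?_)
    rw [(hpair i j hij).measure_inter_preimage_eq_mul {x} {x}
      (measurableSet_singleton x) (measurableSet_singleton x), hmu i x, hmu j x,
      ENNReal.toReal_mul, sq]
  -- expressing the count as a sum of indicators
  set g : (Fin n → Bool) → Ω → ℝ := fun x => (U x).indicator 1 with hgdef
  have hNeq : ∀ ω, ((H.filter fun x => ∃ i, X i ω = x).card : ℝ) = ∑ x ∈ H, g x ω := by
    intro ω
    rw [Finset.card_filter]
    push_cast
    refine Finset.sum_congr rfl (fun x _ => ?_)
    by_cases h : ∃ i, X i ω = x <;>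
      simp [hgdef, Set.indicator_apply, hUdef, Set.mem_setOf_eq, h]
  have hIntg : ∀ x, Integrable (g x) μ := fun x =>
    (integrable_indicator_iff (hUmeas x)).2 (integrableOn_const (measure_ne_top μ _))
  have hIntN : Integrable (fun ω => ((H.filter fun x => ∃ i, X i ω = x).card : ℝ)) μ := by
    have : (fun ω => ((H.filter fun x => ∃ i, X i ω = x).card : ℝ))
        = fun ω => ∑ x ∈ H, g x ω := funext hNeq
    rw [this]
    exact integrable_finset_sum H (fun x _ => hIntg x)
  have hIN : (∫ ω, ((H.filter fun x => ∃ i, X i ω = x).card : ℝ) ∂μ)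
      = ∑ x ∈ H, (μ (U x)).toReal := by
    simp_rw [hNeq]
    rw [integral_finset_sum H (fun x _ => hIntg x)]
    exact Finset.sum_congr rfl (fun x _ => integral_indicator_one (hUmeas x))
  -- first part
  have part1 : (m : ℝ) * ε / 2 ≤ ∫ ω, ((H.filter fun x => ∃ i, X i ω = x).card : ℝ) ∂μ := by
    rw [hIN]
    have hsm := sum_min_bound ε H hne D htv
    have hinv : ((H.card : ℝ))⁻¹ ≤ 1/m := by
      rw [one_div]
      exact inv_anti₀ hm0 (by exact_mod_cast hHm)
    calc (m : ℝ) * ε / 2 = (m:ℝ)/2 * ε := by ring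
      _ ≤ (m:ℝ)/2 * ∑ x ∈ H, min (D x).toReal ((H.card : ℝ))⁻¹ := by
          apply mul_le_mul_of_nonneg_left hsm (by positivity)
      _ = ∑ x ∈ H, (m:ℝ)/2 * min (D x).toReal ((H.card : ℝ))⁻¹ := Finset.mul_sum _ _ _
      _ ≤ ∑ x ∈ H, (m:ℝ)/2 * min (D x).toReal (1/m) := by
          refine Finset.sum_le_sum (fun x _ => ?_)
          exact mul_le_mul_of_nonneg_left (min_le_min (le_refl _) hinv) (by positivity)
      _ ≤ ∑ x ∈ H, (μ (U x)).toReal := Finset.sum_le_sum (fun x _ => hkey x)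
  refine ⟨part1, ?_⟩
  -- second part
  intro hzero
  set c : ℝ := (m : ℝ) * ε / 2 with hcdef
  set N : Ω → ℝ := fun ω => ((H.filter fun x => ∃ i, X i ω = x).card : ℝ) with hNdef
  set A : Set Ω := {ω | c ≤ N ω} with hAdef
  have hae : ∀ᵐ ω ∂μ, ω ∉ A := (MeasureTheory.measure_eq_zero_iff_ae_notMem).1 hzero
  have hfnn : 0 ≤ᵐ[μ] fun ω => c - N ω := by
    filter_upwards [hae] with ω hω
    have : ¬ c ≤ N ω := hω
    simp only [Pi.zero_apply]
    linarith [lt_of_not_ge this]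
  have hfint : Integrable (fun ω => c - N ω) μ := (integrable_const c).sub hIntN
  have hsupp : 0 < μ (Function.support fun ω => c - N ω) := by
    have hsub : Aᶜ ⊆ Function.support fun ω => c - N ω := by
      intro ω hω
      have : ¬ c ≤ N ω := hω
      simp only [Function.mem_support]
      intro h
      have : N ω = c := by linarith [sub_eq_zero.1 h]
      exact hω (by simp [hAdef, this])
    have h1 : (1 : ENNReal) ≤ μ Aᶜ := by
      have := measure_union_le (μ := μ) A Aᶜ
      rw [Set.union_compl_self, measure_univ, hzero, zero_add] at this
      exact this
    calc (0:ENNReal) < 1 := by norm_num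
      _ ≤ μ Aᶜ := h1
      _ ≤ μ _ := measure_mono hsub
  have hpos : 0 < ∫ ω, (c - N ω) ∂μ :=
    (integral_pos_iff_support_of_nonneg_ae hfnn hfint).2 hsupp
  rw [integral_sub (integrable_const c) hIntN, integral_const, probReal_univ] at hpos
  simp only [ENNReal.toReal_one, one_smul, smul_eq_mul, one_mul] at hpos
  have : ∫ ω, N ω ∂μ < c := by linarith
  exact absurd part1 (by rw [hcdef] at this ⊢; exact not_le.2 this)
end

section
/- Variance bound for |C_O| (from the proof of Claim 5.5): Fix n ≥ 1 and pairwise disjoint finite alphabets Σ₁,…,Σₙ with Σ := Σ₁ ∪ ⋯ ∪ Σₙ, where |Σ| > 2n. Let C ⊆ Σ₁ × ⋯ × Σₙ be a nonempty code with d := |C|, and suppose that for every l ∈ {1,…,n−1}, the probability over two independent uniformly random codewords c, c' of C that Δ(c,c') = n − l is at most (n/|Σ|)^l. Let Z := |C_O| for a uniformly random oracle O : Σ → {0,1}. Then E[Z] = d·2^{-n} and Var(Z) ≤ d·2^{-n} + d²·2^{-2n}·(2n/(|Σ| − 2n)). -/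
open Finset
open scoped Classical

variable {Sym : Type}

/-- The Hamming distance `Δ(c, c')`: the number of coordinates where `c` and `c'` differ. -/
def hamDist {n : ℕ} [DecidableEq Sym] (c c' : Fin n → Sym) : ℕ :=
  (Finset.univ.filter fun i : Fin n => c i ≠ c' i).card

/-- Expectation of a real quantity under a uniformly random oracle `O : Σ → {0,1}`. -/
noncomputable def expOracle [Fintype Sym] (f : (Sym → Bool) → ℝ) : ℝ :=
  (∑ O : Sym → Bool, f O) / (Fintype.card (Sym → Bool))

section helper
variable [Fintype Sym] [DecidableEq Sym]

lemma count_false_eq (S : Finset Sym) :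
    (Finset.univ.filter fun O : Sym → Bool => ∀ x ∈ S, O x = false).card
      = 2 ^ (Fintype.card Sym - S.card) := by
  rw [← Fintype.card_subtype]
  have e : {O : Sym → Bool // ∀ x ∈ S, O x = false} ≃ ((Sᶜ : Finset Sym) → Bool) :=
  { toFun := fun O x => O.1 x.1
    invFun := fun g => ⟨fun x => if h : x ∈ (Sᶜ : Finset Sym) then g ⟨x, h⟩ else false, by
      intro x hx
      simp [Finset.mem_compl, hx]⟩
    left_inv := fun O => by
      ext x
      by_cases h : x ∈ (Sᶜ : Finset Sym)
      · simp [h]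
      · have hx : x ∈ S := by simpa [Finset.mem_compl] using h
        simp [h, O.2 x hx]
    right_inv := fun g => by
      ext x
      simp [x.2] }
  rw [Fintype.card_congr e]
  simp [Finset.card_compl]

variable {n : ℕ} {A : Fin n → Finset Sym}

lemma inj_of_mem (hdisj : ∀ i j : Fin n, i ≠ j → Disjoint (A i) (A j))
    {c : Fin n → Sym} (hc : ∀ i, c i ∈ A i) : Function.Injective c := by
  intro i j hij
  by_contra h
  exact (Finset.disjoint_left.mp (hdisj i j h)) (hc i) (hij ▸ hc j)

lemma hamDist_le (c c' : Fin n → Sym) : hamDist c c' ≤ n := by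
  classical
  calc hamDist c c' ≤ (Finset.univ : Finset (Fin n)).card := Finset.card_filter_le _ _
  _ = n := by simp

lemma hamDist_pos {c c' : Fin n → Sym} (h : c ≠ c') : 1 ≤ hamDist c c' := by
  rcases Function.ne_iff.mp h with ⟨i, hi⟩
  exact Finset.card_pos.mpr ⟨i, Finset.mem_filter.mpr ⟨Finset.mem_univ i, hi⟩⟩

lemma union_card (hdisj : ∀ i j : Fin n, i ≠ j → Disjoint (A i) (A j))
    {c c' : Fin n → Sym} (hc : ∀ i, c i ∈ A i) (hc' : ∀ i, c' i ∈ A i) :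
    ((Finset.univ.image c) ∪ (Finset.univ.image c')).card = n + hamDist c c' := by
  have hic := inj_of_mem hdisj hc
  have hic' := inj_of_mem hdisj hc'
  have h1 : (Finset.univ.image c).card = n := by
    rw [Finset.card_image_of_injective _ hic, Finset.card_univ, Fintype.card_fin]
  have h2 : (Finset.univ.image c').card = n := by
    rw [Finset.card_image_of_injective _ hic', Finset.card_univ, Fintype.card_fin]
  have hinter : (Finset.univ.image c) ∩ (Finset.univ.image c')
      = (Finset.univ.filter fun i => c i = c' i).image c := by
    ext x
    simp only [Finset.mem_inter, Finset.mem_image, Finset.mem_filter, Finset.mem_univ, true_and]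
    constructor
    · rintro ⟨⟨i, rfl⟩, ⟨j, hj⟩⟩
      have hij : i = j := by
        by_contra h
        exact (Finset.disjoint_left.mp (hdisj i j h)) (hc i) (hj ▸ hc' j)
      subst hij
      exact ⟨i, hj.symm, rfl⟩
    · rintro ⟨i, hi, rfl⟩
      exact ⟨⟨i, rfl⟩, ⟨i, hi.symm⟩⟩
  have hinter_card : ((Finset.univ.image c) ∩ (Finset.univ.image c')).card
      = n - hamDist c c' := by
    rw [hinter, Finset.card_image_of_injective _ hic]
    have := Finset.card_filter_add_card_filter_not
      (s := (Finset.univ : Finset (Fin n))) (p := fun i => c i = c' i)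
    unfold hamDist
    simp only [Finset.card_univ, Fintype.card_fin, ne_eq] at this ⊢
    omega
  have := Finset.card_union_add_card_inter (Finset.univ.image c) (Finset.univ.image c')
  rw [h1, h2, hinter_card] at this
  have hd := hamDist_le c c'
  omega

lemma pair_count (hdisj : ∀ i j : Fin n, i ≠ j → Disjoint (A i) (A j))
    {c c' : Fin n → Sym} (hc : ∀ i, c i ∈ A i) (hc' : ∀ i, c' i ∈ A i) :
    (Finset.univ.filter fun O : Sym → Bool =>
        (∀ i, O (c i) = false) ∧ (∀ i, O (c' i) = false)).card
      = 2 ^ (Fintype.card Sym - (n + hamDist c c')) := by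
  rw [← union_card hdisj hc hc', ← count_false_eq]
  congr 1
  apply Finset.filter_congr
  intro O _
  simp only [Finset.mem_union, Finset.mem_image, Finset.mem_univ, true_and]
  constructor
  · rintro ⟨h1, h2⟩ x (⟨i, rfl⟩ | ⟨i, rfl⟩)
    exacts [h1 i, h2 i]
  · intro h
    exact ⟨fun i => h _ (Or.inl ⟨i, rfl⟩), fun i => h _ (Or.inr ⟨i, rfl⟩)⟩

lemma single_count (hdisj : ∀ i j : Fin n, i ≠ j → Disjoint (A i) (A j))
    {c : Fin n → Sym} (hc : ∀ i, c i ∈ A i) :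
    (Finset.univ.filter fun O : Sym → Bool => ∀ i, O (c i) = false).card
      = 2 ^ (Fintype.card Sym - n) := by
  have h1 : (Finset.univ.image c).card = n := by
    rw [Finset.card_image_of_injective _ (inj_of_mem hdisj hc), Finset.card_univ,
      Fintype.card_fin]
  have h2 := count_false_eq (S := Finset.univ.image c)
  rw [h1] at h2
  rw [← h2]
  congr 1
  apply Finset.filter_congr
  intro O _
  simp only [Finset.mem_image, Finset.mem_univ, true_and]
  constructor
  · rintro h x ⟨i, rfl⟩
    exact h i
  · intro h i
    exact h _ ⟨i, rfl⟩

end helper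

set_option maxHeartbeats 1000000 in
/-- **Variance bound for |C_O|** (from the proof of Claim 5.5). Let `Σ₁,…,Σₙ` be pairwise
disjoint alphabets covering `Σ`, with `|Σ| > 2n`, and let `C` be a nonempty code of size `d`
such that for every `l ∈ {1,…,n−1}`, two independent uniformly random codewords are at
Hamming distance `n − l` with probability at most `(n/|Σ|)^l`. Then for `Z := |C_O|` over a
uniformly random oracle, `E[Z] = d·2^{-n}` and
`Var(Z) ≤ d·2^{-n} + d²·2^{-2n}·(2n/(|Σ| − 2n))`. -/
theorem codeZero_variance_bound
    {n : ℕ} (hn : 1 ≤ n) [Fintype Sym] [DecidableEq Sym]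
    (A : Fin n → Finset Sym)
    (hdisj : ∀ i j : Fin n, i ≠ j → Disjoint (A i) (A j))
    (hcover : ∀ x : Sym, ∃ i, x ∈ A i)
    (hbig : 2 * n < Fintype.card Sym)
    (C : Finset (Fin n → Sym)) (hCne : C.Nonempty) (hC : ∀ c ∈ C, ∀ i, c i ∈ A i)
    (hhw : ∀ l : ℕ, 1 ≤ l → l ≤ n - 1 →
      (((C ×ˢ C).filter fun p => hamDist p.1 p.2 = n - l).card : ℝ) /
          ((C.card : ℝ) * (C.card : ℝ)) ≤
        ((n : ℝ) / (Fintype.card Sym : ℝ)) ^ l) :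
    expOracle (fun O : Sym → Bool => ((codeZero C O).card : ℝ)) = (C.card : ℝ) / 2 ^ n ∧
      expOracle (fun O : Sym → Bool =>
          (((codeZero C O).card : ℝ) - (C.card : ℝ) / 2 ^ n) ^ 2) ≤
        (C.card : ℝ) / 2 ^ n +
          (C.card : ℝ) ^ 2 / 2 ^ (2 * n) *
            (2 * (n : ℝ) / ((Fintype.card Sym : ℝ) - 2 * n)) := by
  classical
  set m := Fintype.card Sym with hm
  have hnm : n ≤ m := by omega
  have h2nm : n + n ≤ m := by omega
  have hNR : (Fintype.card (Sym → Bool) : ℝ) = 2 ^ m := by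
    rw [Fintype.card_fun]
    push_cast
    simp [hm]
  have hN0 : (0:ℝ) < 2 ^ m := by positivity
  have hexp : ∀ f : (Sym → Bool) → ℝ,
      expOracle f = (∑ O : Sym → Bool, f O) / 2 ^ m := by
    intro f
    unfold expOracle
    have h : ∀ (I : Fintype (Sym → Bool)), ((@Fintype.card _ I : ℕ) : ℝ) = 2 ^ m := by
      intro I
      rw [Subsingleton.elim I (Pi.instFintype : Fintype (Sym → Bool))]
      exact hNR
    rw [h]
    congr!
  -- pointwise formula for Z
  have hZ : ∀ O : Sym → Bool, ((codeZero C O).card : ℝ)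
      = ∑ c ∈ C, (if ∀ i, O (c i) = false then (1:ℝ) else 0) := by
    intro O
    unfold codeZero
    rw [Finset.card_filter]
    push_cast
    rfl
  have hsum : ∑ O : Sym → Bool, ((codeZero C O).card : ℝ)
      = (C.card : ℝ) * 2 ^ (m - n) := by
    simp_rw [hZ]
    rw [Finset.sum_comm]
    rw [Finset.sum_congr rfl (fun c hc => ?_), Finset.sum_const, nsmul_eq_mul]
    rw [Finset.sum_boole, single_count hdisj (hC c hc)]
    push_cast
    rfl
  -- expectation
  have hE : expOracle (fun O : Sym → Bool => ((codeZero C O).card : ℝ))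
      = (C.card : ℝ) / 2 ^ n := by
    rw [hexp, hsum, div_eq_div_iff hN0.ne' (by positivity), mul_assoc, ← pow_add,
      Nat.sub_add_cancel hnm]
  refine ⟨hE, ?_⟩
  set μ : ℝ := (C.card : ℝ) / 2 ^ n with hμ
  have hsumZ : ∑ O : Sym → Bool, ((codeZero C O).card : ℝ) = μ * 2 ^ m := by
    rw [hsum, hμ, div_mul_eq_mul_div, eq_div_iff (by positivity), mul_assoc, ← pow_add,
      Nat.sub_add_cancel hnm]
  -- variance identity
  have hvar : expOracle (fun O : Sym → Bool => (((codeZero C O).card : ℝ) - μ) ^ 2)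
      = (∑ O : Sym → Bool, ((codeZero C O).card : ℝ) * ((codeZero C O).card : ℝ)) / 2 ^ m
        - μ ^ 2 := by
    rw [hexp]
    have hpt : ∑ O : Sym → Bool, (((codeZero C O).card : ℝ) - μ) ^ 2
        = (∑ O : Sym → Bool, ((codeZero C O).card : ℝ) * ((codeZero C O).card : ℝ))
          - 2 * μ * (∑ O : Sym → Bool, ((codeZero C O).card : ℝ))
          + (2:ℝ) ^ m * μ ^ 2 := by
      rw [Finset.mul_sum, ← Finset.sum_sub_distrib]
      have hconst : (2:ℝ) ^ m * μ ^ 2 = ∑ _O : Sym → Bool, μ ^ 2 := by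
        rw [Finset.sum_const, nsmul_eq_mul, Finset.card_univ, hNR]
      rw [hconst, ← Finset.sum_add_distrib]
      apply Finset.sum_congr rfl
      intro O _
      ring
    rw [hpt, hsumZ]
    field_simp
    ring
  rw [hvar]
  -- second moment as a sum over pairs
  have hsq : (∑ O : Sym → Bool, ((codeZero C O).card : ℝ) * ((codeZero C O).card : ℝ))
      = ∑ p ∈ C ×ˢ C, (2:ℝ) ^ (m - (n + hamDist p.1 p.2)) := by
    have hpt : ∀ O : Sym → Bool,
        ((codeZero C O).card : ℝ) * ((codeZero C O).card : ℝ)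
          = ∑ p ∈ C ×ˢ C,
              (if (∀ i, O (p.1 i) = false) ∧ (∀ i, O (p.2 i) = false) then (1:ℝ) else 0) := by
      intro O
      rw [hZ O, Finset.sum_mul_sum, ← Finset.sum_product']
      apply Finset.sum_congr rfl
      intro p _
      by_cases h1 : ∀ i, O (p.1 i) = false <;> by_cases h2 : ∀ i, O (p.2 i) = false <;>
        simp [h1, h2]
    simp_rw [hpt]
    rw [Finset.sum_comm]
    apply Finset.sum_congr rfl
    intro p hp
    rw [Finset.sum_boole,
      pair_count hdisj (hC _ (Finset.mem_product.mp hp).1) (hC _ (Finset.mem_product.mp hp).2)]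
    push_cast
    rfl
  rw [hsq]
  -- rewrite each term of the pair sum as 1/2^(n+Δ)
  have hterm : ∀ p ∈ C ×ˢ C,
      (2:ℝ) ^ (m - (n + hamDist p.1 p.2)) / 2 ^ m = 1 / 2 ^ (n + hamDist p.1 p.2) := by
    intro p _
    have hk : n + hamDist p.1 p.2 ≤ m := by
      have := hamDist_le p.1 p.2
      omega
    rw [div_eq_div_iff hN0.ne' (by positivity), one_mul, ← pow_add, Nat.sub_add_cancel hk]
  rw [Finset.sum_div, Finset.sum_congr rfl hterm]
  -- mu^2 as a pair sum
  have hμ2 : μ ^ 2 = ∑ _p ∈ C ×ˢ C, (1:ℝ) / 2 ^ (2 * n) := by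
    rw [Finset.sum_const, nsmul_eq_mul, Finset.card_product, hμ]
    push_cast
    rw [div_pow, ← pow_mul]
    ring
  rw [hμ2, ← Finset.sum_sub_distrib]
  -- split into diagonal and off-diagonal
  rw [← Finset.diag_union_offDiag C, Finset.sum_union (Finset.disjoint_diag_offDiag C)]
  have hdiag : ∑ p ∈ C.diag, ((1:ℝ) / 2 ^ (n + hamDist p.1 p.2) - 1 / 2 ^ (2 * n))
      ≤ (C.card : ℝ) / 2 ^ n := by
    have hle : ∀ p ∈ C.diag, (1:ℝ) / 2 ^ (n + hamDist p.1 p.2) - 1 / 2 ^ (2 * n)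
        ≤ 1 / 2 ^ n := by
      intro p hp
      obtain ⟨-, h2⟩ := Finset.mem_diag.mp hp
      have h0 : hamDist p.1 p.2 = 0 := by
        rw [h2]
        simp [hamDist]
      rw [h0]
      have : (0:ℝ) ≤ 1 / 2 ^ (2 * n) := by positivity
      simp only [Nat.add_zero]
      linarith
    calc ∑ p ∈ C.diag, ((1:ℝ) / 2 ^ (n + hamDist p.1 p.2) - 1 / 2 ^ (2 * n))
        ≤ ∑ _p ∈ C.diag, (1:ℝ) / 2 ^ n := Finset.sum_le_sum hle
      _ = (C.card : ℝ) / 2 ^ n := by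
          rw [Finset.sum_const, nsmul_eq_mul, Finset.diag_card]
          ring
  have hoff : ∑ p ∈ C.offDiag, ((1:ℝ) / 2 ^ (n + hamDist p.1 p.2) - 1 / 2 ^ (2 * n))
      ≤ (C.card : ℝ) ^ 2 / 2 ^ (2 * n) * (2 * (n : ℝ) / ((m : ℝ) - 2 * n)) := by
    have hd0 : (0:ℝ) < C.card := by exact_mod_cast hCne.card_pos
    have hM0 : (0:ℝ) < m := by
      have : 0 < m := by omega
      exact_mod_cast this
    set q : ℝ := 2 * n / m with hq
    have hq0 : 0 ≤ q := by positivity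
    have hq1 : q < 1 := by
      rw [hq, div_lt_one hM0]
      exact_mod_cast hbig
    have h1q : (0:ℝ) < 1 - q := by linarith
    have hM2n : (0:ℝ) < (m : ℝ) - 2 * n := by
      have : (2 * n : ℝ) < m := by exact_mod_cast hbig
      linarith
    -- pointwise bound by G(Δ)
    have hstep1 : ∑ p ∈ C.offDiag, ((1:ℝ) / 2 ^ (n + hamDist p.1 p.2) - 1 / 2 ^ (2 * n))
        ≤ ∑ p ∈ C.offDiag,
            (if hamDist p.1 p.2 = n then (0:ℝ) else 1 / 2 ^ (n + hamDist p.1 p.2)) := by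
      apply Finset.sum_le_sum
      intro p _
      by_cases hk : hamDist p.1 p.2 = n
      · rw [if_pos hk, hk]
        have h2n : n + n = 2 * n := by ring
        rw [h2n]
        simp
      · rw [if_neg hk]
        have : (0:ℝ) ≤ 1 / 2 ^ (2 * n) := by positivity
        linarith
    -- fiberwise decomposition
    have hmaps : ∀ p ∈ C.offDiag, hamDist p.1 p.2 ∈ Finset.Icc 1 n := by
      intro p hp
      obtain ⟨-, -, h3⟩ := Finset.mem_offDiag.mp hp
      exact Finset.mem_Icc.mpr ⟨hamDist_pos h3, hamDist_le _ _⟩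
    have hstep2 : ∑ p ∈ C.offDiag,
          (if hamDist p.1 p.2 = n then (0:ℝ) else 1 / 2 ^ (n + hamDist p.1 p.2))
        = ∑ k ∈ Finset.Icc 1 n, ∑ p ∈ C.offDiag.filter (fun p => hamDist p.1 p.2 = k),
            (if hamDist p.1 p.2 = n then (0:ℝ) else 1 / 2 ^ (n + hamDist p.1 p.2)) :=
      (Finset.sum_fiberwise_of_maps_to hmaps _).symm
    have hoffsub : C.offDiag ⊆ C ×ˢ C := by
      rw [← Finset.diag_union_offDiag C]
      exact Finset.subset_union_right
    -- per-fiber bound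
    have hstep3 : ∀ k ∈ Finset.Icc 1 n,
        ∑ p ∈ C.offDiag.filter (fun p => hamDist p.1 p.2 = k),
            (if hamDist p.1 p.2 = n then (0:ℝ) else 1 / 2 ^ (n + hamDist p.1 p.2))
          ≤ (if k = n then (0:ℝ) else
              (C.card : ℝ) ^ 2 / 2 ^ (2 * n) * q ^ (n - k)) := by
      intro k hk
      obtain ⟨hk1, hk2⟩ := Finset.mem_Icc.mp hk
      by_cases hkn : k = n
      · rw [if_pos hkn]
        apply le_of_eq
        apply Finset.sum_eq_zero
        intro p hp
        have := (Finset.mem_filter.mp hp).2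
        rw [if_pos (by rw [this, hkn])]
      · rw [if_neg hkn]
        have hfib : ∑ p ∈ C.offDiag.filter (fun p => hamDist p.1 p.2 = k),
              (if hamDist p.1 p.2 = n then (0:ℝ) else 1 / 2 ^ (n + hamDist p.1 p.2))
            = ((C.offDiag.filter (fun p => hamDist p.1 p.2 = k)).card : ℝ)
                * (1 / 2 ^ (n + k)) := by
          rw [Finset.sum_congr rfl (fun p hp => ?_), Finset.sum_const, nsmul_eq_mul]
          have hpk := (Finset.mem_filter.mp hp).2
          rw [if_neg (by rw [hpk]; exact hkn), hpk]
        rw [hfib]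
        have hcard_le : ((C.offDiag.filter (fun p => hamDist p.1 p.2 = k)).card : ℝ)
            ≤ (((C ×ˢ C).filter fun p => hamDist p.1 p.2 = n - (n - k)).card : ℝ) := by
          have hnk : n - (n - k) = k := by omega
          rw [hnk]
          exact_mod_cast Finset.card_le_card
            (Finset.filter_subset_filter _ hoffsub)
        have hhwk := hhw (n - k) (by omega) (by omega)
        rw [div_le_iff₀ (by positivity)] at hhwk
        have hcount : ((C.offDiag.filter (fun p => hamDist p.1 p.2 = k)).card : ℝ)
            ≤ (C.card : ℝ) * (C.card : ℝ) * ((n : ℝ) / (m : ℝ)) ^ (n - k) := by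
          calc ((C.offDiag.filter (fun p => hamDist p.1 p.2 = k)).card : ℝ)
              ≤ _ := hcard_le
            _ ≤ _ := hhwk
            _ = (C.card : ℝ) * (C.card : ℝ) * ((n : ℝ) / (m : ℝ)) ^ (n - k) := by ring
        calc ((C.offDiag.filter (fun p => hamDist p.1 p.2 = k)).card : ℝ) * (1 / 2 ^ (n + k))
            ≤ ((C.card : ℝ) * (C.card : ℝ) * ((n : ℝ) / (m : ℝ)) ^ (n - k)) * (1 / 2 ^ (n + k)) := by
              apply mul_le_mul_of_nonneg_right hcount (by positivity)
          _ = (C.card : ℝ) ^ 2 / 2 ^ (2 * n) * q ^ (n - k) := by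
              have hpow2 : (2:ℝ) ^ (n - k) * 2 ^ (n + k) = 2 ^ (2 * n) := by
                rw [← pow_add]
                congr 1
                omega
              have hqpow : q ^ (n - k) = 2 ^ (n - k) * ((n:ℝ)/(m:ℝ)) ^ (n - k) := by
                rw [hq, ← mul_pow]
                congr 1
                ring
              rw [hqpow, ← hpow2]
              field_simp
    have hstep3' : ∑ k ∈ Finset.Icc 1 n, ∑ p ∈ C.offDiag.filter (fun p => hamDist p.1 p.2 = k),
            (if hamDist p.1 p.2 = n then (0:ℝ) else 1 / 2 ^ (n + hamDist p.1 p.2))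
        ≤ ∑ k ∈ Finset.Icc 1 n,
            (if k = n then (0:ℝ) else (C.card : ℝ) ^ 2 / 2 ^ (2 * n) * q ^ (n - k)) :=
      Finset.sum_le_sum hstep3
    -- evaluate the bound sum
    have hIcc : Finset.Icc 1 n = insert n (Finset.Icc 1 (n - 1)) := by
      ext x
      simp only [Finset.mem_Icc, Finset.mem_insert]
      omega
    have hnot : n ∉ Finset.Icc 1 (n - 1) := by
      simp only [Finset.mem_Icc]
      omega
    have hstep4 : ∑ k ∈ Finset.Icc 1 n,
          (if k = n then (0:ℝ) else (C.card : ℝ) ^ 2 / 2 ^ (2 * n) * q ^ (n - k))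
        = (C.card : ℝ) ^ 2 / 2 ^ (2 * n) * ∑ l ∈ Finset.Icc 1 (n - 1), q ^ l := by
      rw [hIcc, Finset.sum_insert hnot, if_pos rfl, zero_add, Finset.mul_sum]
      apply Finset.sum_nbij' (fun k => n - k) (fun l => n - l)
      · intro a ha
        simp only [Finset.mem_Icc] at ha ⊢
        omega
      · intro a ha
        simp only [Finset.mem_Icc] at ha ⊢
        omega
      · intro a ha
        simp only [Finset.mem_Icc] at ha
        omega
      · intro a ha
        simp only [Finset.mem_Icc] at ha
        omega
      · intro a ha
        simp only [Finset.mem_Icc] at ha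
        rw [if_neg (by omega)]
    -- geometric series bound
    have hrange : Finset.range n = insert 0 (Finset.Icc 1 (n - 1)) := by
      ext x
      simp only [Finset.mem_range, Finset.mem_Icc, Finset.mem_insert]
      omega
    have h0not : 0 ∉ Finset.Icc 1 (n - 1) := by
      simp only [Finset.mem_Icc]
      omega
    have hgeom : ∑ l ∈ Finset.Icc 1 (n - 1), q ^ l ≤ q / (1 - q) := by
      have hsum_range : ∑ l ∈ Finset.range n, q ^ l = (q ^ n - 1) / (q - 1) :=
        geom_sum_eq (ne_of_lt hq1) n
      have heq : ∑ l ∈ Finset.Icc 1 (n - 1), q ^ l = (q - q ^ n) / (1 - q) := by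
        have h1 : (1:ℝ) + ∑ l ∈ Finset.Icc 1 (n - 1), q ^ l = (q ^ n - 1) / (q - 1) := by
          rw [← hsum_range, hrange, Finset.sum_insert h0not, pow_zero]
        have h2 : (q ^ n - 1) / (q - 1) = (1 - q ^ n) / (1 - q) := by
          rw [div_eq_div_iff (by linarith) (by linarith)]
          ring
        rw [h2] at h1
        field_simp at h1 ⊢
        linarith
      rw [heq, div_le_div_iff₀ h1q h1q]
      have := pow_nonneg hq0 n
      nlinarith
    have hfinal : q / (1 - q) = 2 * (n : ℝ) / ((m : ℝ) - 2 * n) := by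
      rw [hq, div_eq_div_iff (by rw [← hq]; exact h1q.ne') hM2n.ne']
      field_simp
      try ring
    calc ∑ p ∈ C.offDiag, ((1:ℝ) / 2 ^ (n + hamDist p.1 p.2) - 1 / 2 ^ (2 * n))
        ≤ _ := hstep1
      _ = _ := hstep2
      _ ≤ _ := hstep3'
      _ = (C.card : ℝ) ^ 2 / 2 ^ (2 * n) * ∑ l ∈ Finset.Icc 1 (n - 1), q ^ l := hstep4
      _ ≤ (C.card : ℝ) ^ 2 / 2 ^ (2 * n) * (q / (1 - q)) := by
          apply mul_le_mul_of_nonneg_left hgeom (by positivity)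
      _ = _ := by rw [hfinal]
  calc _ ≤ (C.card : ℝ) / 2 ^ n
        + (C.card : ℝ) ^ 2 / 2 ^ (2 * n) * (2 * (n : ℝ) / ((m : ℝ) - 2 * n)) :=
      add_le_add hdiag hoff
    _ = _ := rfl
end
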